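/- arXiv:1707.01233 — 12 statements merged into one kernel-verified Lean document; each statement's English description precedes it below -/
import Mathlib

section
/- (Theorem of Apollonius.) Let n ≥ 1, let a_1, …, a_n > 0, and let x¹, …, xⁿ ∈ ℝⁿ be a complete system of conjugate semi-diameters of the ellipsoid Σ_{k=1}^n x_k²/a_k² = 1. For each k ∈ {1, …, n} define v_k := Σ_{S ⊆ {1,…,n}, |S| = k} det G_S, where G_S is the Gram matrix (⟨xⁱ, xʲ⟩)_{i,j ∈ S} of the vectors indexed by S. Then v_k = Σ_{S ⊆ {1,…,n}, |S| = k} Π_{i ∈ S} a_i², the k-th elementary symmetric polynomial of a_1², …, a_n²; in particular v_k does not depend on the choice of the complete conjugate system. -/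
/-!
Let `C` be the matrix whose columns are the `xⁱ`, and `D = diag(a_1², …, a_n²)`. The Gram matrix
of the family is `Cᵀ C`, and conjugacy says `Cᵀ D⁻¹ C = 1`; hence `D⁻¹ C Cᵀ = 1`, i.e.
`C Cᵀ = D`. The sum of the `k × k` principal minors of a matrix is the `k`-th coefficient of
`det (1 + X • A)`, so by the Weinstein–Aronszajn identity it agrees for `Cᵀ C` and `C Cᵀ = D`,
and for the diagonal matrix `D` it is the elementary symmetric polynomial of the `a_i²`.
-/

open Matrix

namespace Matrix

variable {m n R : Type*} [Fintype m] [Fintype n] [DecidableEq m] [DecidableEq n]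

def principalMinorSum [CommRing R] (k : ℕ) (A : Matrix n n R) : R :=
  ∑ s ∈ Finset.univ.powersetCard k, (A.submatrix (Subtype.val : s → n) Subtype.val).det

theorem principalMinorSum_mul_comm [CommRing R] (k : ℕ) (A : Matrix m n R) (B : Matrix n m R) :
    principalMinorSum k (A * B) = principalMinorSum k (B * A) := by
  simp only [principalMinorSum, ← coeff_det_one_add_X_smul_eq_sum_minors, Matrix.map_mul]
  rw [← smul_mul, det_one_add_mul_comm, Matrix.mul_smul]

theorem principalMinorSum_diagonal [CommRing R] (k : ℕ) (d : n → R) :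
    principalMinorSum k (diagonal d) = ∑ s ∈ Finset.univ.powersetCard k, ∏ i ∈ s, d i := by
  refine Finset.sum_congr rfl fun s _ => ?_
  rw [submatrix_diagonal _ _ Subtype.val_injective, det_diagonal]
  exact Finset.prod_coe_sort s d

theorem mul_transpose_eq_diagonal_inv [Field R] {A : Matrix n n R} {v : n → R}
    (h : Aᵀ * diagonal v * A = 1) : A * Aᵀ = diagonal v⁻¹ := by
  have hvA : diagonal v * (A * Aᵀ) = 1 := by
    rw [← mul_assoc]
    exact mul_eq_one_comm.mp (by rwa [← mul_assoc])
  have hv : ∀ i, v i ≠ 0 := fun i hi => by simpa [hi] using congr_fun₂ hvA i i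
  have hvv : diagonal v⁻¹ * diagonal v = 1 := by
    rw [diagonal_mul_diagonal, ← diagonal_one]
    exact congrArg diagonal (funext fun i => inv_mul_cancel₀ (hv i))
  calc A * Aᵀ = diagonal v⁻¹ * diagonal v * (A * Aᵀ) := by rw [hvv, one_mul]
    _ = diagonal v⁻¹ := by rw [mul_assoc, hvA, mul_one]

end Matrix

theorem gram_eq_transpose_mul {n ι : Type*} [Fintype ι] (x : n → EuclideanSpace ℝ ι) :
    gram ℝ x = (of fun k j => x j k)ᵀ * of fun k j => x j k := by
  ext i j
  simp [gram_apply, mul_apply, PiLp.inner_apply, mul_comm]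

theorem apollonius_invariants_general
    (n : ℕ) (a : Fin n → ℝ)
    (x : Fin n → EuclideanSpace ℝ (Fin n))
    (hconj : ∀ i j : Fin n,
      ∑ k, x i k * x j k / (a k) ^ 2 = if i = j then 1 else 0)
    (k : ℕ) :
    ∑ S ∈ Finset.univ.powersetCard k,
        Matrix.det (Matrix.of fun i j : {y : Fin n // y ∈ S} =>
          (inner ℝ (x ↑i) (x ↑j) : ℝ))
      = ∑ S ∈ Finset.univ.powersetCard k, ∏ i ∈ S, (a i) ^ 2 := by
  set C : Matrix (Fin n) (Fin n) ℝ := of fun k j => x j k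
  have hconjC : Cᵀ * diagonal (fun k => (a k ^ 2)⁻¹) * C = 1 := by
    ext i j
    rw [mul_apply]
    simpa [C, mul_diagonal, one_apply, div_eq_mul_inv, mul_right_comm] using hconj i j
  have hdiag : C * Cᵀ = diagonal fun k => a k ^ 2 := by
    simpa [Pi.inv_def] using mul_transpose_eq_diagonal_inv hconjC
  calc _ = principalMinorSum k (gram ℝ x) := rfl
    _ = principalMinorSum k (C * Cᵀ) := by rw [gram_eq_transpose_mul, principalMinorSum_mul_comm]
    _ = _ := by rw [hdiag, principalMinorSum_diagonal]

/-- Theorem of Apollonius: for a complete system of conjugate semi-diameters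
`x¹, …, xⁿ` of the ellipsoid `∑ x_k² / a_k² = 1`, the sum of the determinants of
the Gram matrices of all `k`-element subfamilies equals the `k`-th elementary
symmetric polynomial of `a_1², …, a_n²`; in particular it does not depend on the
choice of the conjugate system. -/
theorem apollonius_invariants
    (n : ℕ) (hn : 1 ≤ n) (a : Fin n → ℝ) (ha : ∀ i, 0 < a i)
    (x : Fin n → EuclideanSpace ℝ (Fin n))
    (hconj : ∀ i j : Fin n,
      ∑ k, x i k * x j k / (a k) ^ 2 = if i = j then 1 else 0)
    (k : ℕ) (hk1 : 1 ≤ k) (hkn : k ≤ n) :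
    ∑ S ∈ Finset.univ.powersetCard k,
        Matrix.det (Matrix.of fun i j : {y : Fin n // y ∈ S} =>
          (inner ℝ (x ↑i) (x ↑j) : ℝ))
      = ∑ S ∈ Finset.univ.powersetCard k, ∏ i ∈ S, (a i) ^ 2 :=
  apollonius_invariants_general n a x hconj k
end

section
/- Let 0 < a_n < ⋯ < a_1 and let h ∈ ℝⁿ be nonzero. Set t(h) = (1 − Σ_i h_i² a_i²)/Σ_i h_i², assume a_i² + t(h) ≠ 0 for all i, and define P(h) ∈ ℝⁿ by P(h)_i = h_i (a_i² + t(h)); P(h) is the point at which the hyperplane {x : ⟨h, x⟩ = 1} touches the unique confocal quadric C(−t(h)) tangent to it. Let d₁(h) be the Euclidean distance from P(h) to the hyperplane {x : ⟨h, x⟩ = 0}, and let d₂(h) be the Euclidean distance from P(h) to the line ℝh. Then d₁(h)·d₂(h) = √( (Σ_i h_i²)(Σ_i h_i² a_i⁴) − (Σ_i h_i² a_i²)² ) / (Σ_i h_i²), and this product is invariant under replacing h by τh for any τ ≠ 0; consequently the points of contact of the parallel tangent hyperplanes with the confocal family lie on an equilateral hyperbola. -/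
/-!
The contact point `p = P(h)` lies on `⟪h, x⟫ = 1`, so its distance to `h^⊥` is `1/‖h‖`, and by
Pythagoras its distance to `ℝh` is `√(‖p‖² - 1/‖h‖²)`. Hence `d₁ d₂ = √(‖h‖²‖p‖² - 1)/‖h‖²`, and the
choice of `t(h)` makes `‖h‖²‖p‖² - 1` collapse to the Gram determinant
`(∑ h_i²)(∑ h_i² a_i⁴) - (∑ h_i² a_i²)²`, which is homogeneous of degree four in `h`: the
quotient by `‖h‖⁴` is invariant under `h ↦ τh`.
-/

open Metric Submodule
open scoped RealInnerProductSpace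

section InnerProductSpace

variable {E : Type*} [NormedAddCommGroup E] [InnerProductSpace ℝ E]

theorem Submodule.infDist_eq_norm_sub_starProjection (K : Submodule ℝ E)
    [K.HasOrthogonalProjection] (x : E) :
    infDist x K = ‖x - K.starProjection x‖ := by
  rw [infDist_eq_iInf, starProjection_minimal]
  simp only [dist_eq_norm]
  rfl

theorem norm_starProjection_span_singleton (g x : E) :
    ‖(ℝ ∙ g).starProjection x‖ = |⟪g, x⟫| / ‖g‖ := by
  rcases eq_or_ne g 0 with rfl | hg
  · simp
  have hg' : ‖g‖ ≠ 0 := norm_ne_zero_iff.mpr hg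
  simp only [starProjection_singleton, norm_smul, Real.norm_eq_abs, abs_div,
    RCLike.ofReal_real_eq_id, id, abs_pow, abs_norm]
  field_simp

theorem infDist_orthogonal_span_singleton (g x : E) :
    infDist x (ℝ ∙ g)ᗮ = |⟪g, x⟫| / ‖g‖ := by
  rw [infDist_eq_norm_sub_starProjection, starProjection_orthogonal_val, sub_sub_cancel,
    norm_starProjection_span_singleton]

theorem infDist_span_singleton (g x : E) :
    infDist x (ℝ ∙ g) = √(‖x‖ ^ 2 - ⟪g, x⟫ ^ 2 / ‖g‖ ^ 2) := by
  have pythagoras := (ℝ ∙ g).norm_sq_eq_add_norm_sq_starProjection x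
  rw [starProjection_orthogonal_val, norm_starProjection_span_singleton, div_pow, sq_abs]
    at pythagoras
  rw [infDist_eq_norm_sub_starProjection, pythagoras, add_sub_cancel_left,
    Real.sqrt_sq (norm_nonneg _)]

theorem infDist_orthogonal_mul_infDist_span_singleton_of_inner_eq_one {g x : E}
    (hgx : ⟪g, x⟫ = 1) :
    infDist x (ℝ ∙ g)ᗮ * infDist x (ℝ ∙ g) = √(‖g‖ ^ 2 * ‖x‖ ^ 2 - 1) / ‖g‖ ^ 2 := by
  have hg : ‖g‖ ≠ 0 := norm_ne_zero_iff.mpr <| by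
    rintro rfl
    simp at hgx
  rw [infDist_orthogonal_span_singleton, infDist_span_singleton, hgx, abs_one, one_pow,
    show ‖x‖ ^ 2 - 1 / ‖g‖ ^ 2 = (‖g‖ ^ 2 * ‖x‖ ^ 2 - 1) / ‖g‖ ^ 2 by field_simp,
    Real.sqrt_div' _ (by positivity), Real.sqrt_sq (norm_nonneg _)]
  field_simp

end InnerProductSpace

section Coordinates

open Finset

variable {ι : Type*}

theorem EuclideanSpace.setOf_exists_forall_eq_mul (g : ι → ℝ) :
    {x : EuclideanSpace ℝ ι | ∃ τ : ℝ, ∀ i, x i = τ * g i}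
      = ((ℝ ∙ WithLp.toLp 2 g : Submodule ℝ (EuclideanSpace ℝ ι)) :
          Set (EuclideanSpace ℝ ι)) := by
  ext x
  simp [mem_span_singleton, WithLp.ext_iff, funext_iff, eq_comm]

variable [Fintype ι]

theorem EuclideanSpace.setOf_sum_mul_eq_zero (g : ι → ℝ) :
    {x : EuclideanSpace ℝ ι | ∑ i, g i * x i = 0}
      = ((ℝ ∙ WithLp.toLp 2 g)ᗮ : Set (EuclideanSpace ℝ ι)) := by
  ext x
  simp [mem_orthogonal_singleton_iff_inner_right, PiLp.inner_apply, mul_comm]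

theorem sum_sq_ne_zero_of_ne_zero {g : ι → ℝ} (hg : g ≠ 0) : ∑ i, g i ^ 2 ≠ 0 := by
  simpa [sq, sum_mul_self_eq_zero_iff, funext_iff] using hg

variable {w g : ι → ℝ} {t : ℝ}

theorem sum_mul_mul_add_eq_one (hg : g ≠ 0)
    (ht : t = (1 - ∑ i, g i ^ 2 * w i) / ∑ i, g i ^ 2) :
    ∑ i, g i * (g i * (w i + t)) = 1 := by
  have hS := sum_sq_ne_zero_of_ne_zero hg
  calc ∑ i, g i * (g i * (w i + t)) = ∑ i, g i ^ 2 * w i + t * ∑ i, g i ^ 2 := by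
        rw [mul_sum, ← sum_add_distrib]
        exact sum_congr rfl fun i _ => by ring
    _ = 1 := by rw [ht]; field_simp; ring

theorem sum_sq_mul_sum_sq_mul_add_sub_one (hg : g ≠ 0)
    (ht : t = (1 - ∑ i, g i ^ 2 * w i) / ∑ i, g i ^ 2) :
    (∑ i, g i ^ 2) * ∑ i, (g i * (w i + t)) ^ 2 - 1
      = (∑ i, g i ^ 2) * (∑ i, g i ^ 2 * w i ^ 2) - (∑ i, g i ^ 2 * w i) ^ 2 := by
  have hS := sum_sq_ne_zero_of_ne_zero hg
  have expand : ∑ i, (g i * (w i + t)) ^ 2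
      = ∑ i, g i ^ 2 * w i ^ 2 + 2 * t * ∑ i, g i ^ 2 * w i + t ^ 2 * ∑ i, g i ^ 2 := by
    rw [mul_sum, mul_sum, ← sum_add_distrib, ← sum_add_distrib]
    exact sum_congr rfl fun i _ => by ring
  rw [expand, ht]
  field_simp
  ring

theorem infDist_mul_infDist_of_eq_mul_add
    (hg : g ≠ 0) (ht : t = (1 - ∑ i, g i ^ 2 * w i) / ∑ i, g i ^ 2)
    {p : EuclideanSpace ℝ ι} (hp : ∀ i, p i = g i * (w i + t)) :
    infDist p {x : EuclideanSpace ℝ ι | ∑ i, g i * x i = 0}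
        * infDist p {x : EuclideanSpace ℝ ι | ∃ τ : ℝ, ∀ i, x i = τ * g i}
      = √((∑ i, g i ^ 2) * (∑ i, g i ^ 2 * w i ^ 2) - (∑ i, g i ^ 2 * w i) ^ 2)
          / ∑ i, g i ^ 2 := by
  have inner_eq : ⟪WithLp.toLp 2 g, p⟫ = 1 := by
    simpa [PiLp.inner_apply, hp, mul_comm] using sum_mul_mul_add_eq_one hg ht
  have norm_g : ‖WithLp.toLp 2 g‖ ^ 2 = ∑ i, g i ^ 2 := by
    simp [EuclideanSpace.norm_sq_eq]
  have norm_p : ‖p‖ ^ 2 = ∑ i, (g i * (w i + t)) ^ 2 := by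
    simp [EuclideanSpace.norm_sq_eq, hp, mul_pow]
  rw [EuclideanSpace.setOf_sum_mul_eq_zero, EuclideanSpace.setOf_exists_forall_eq_mul,
    infDist_orthogonal_mul_infDist_span_singleton_of_inner_eq_one inner_eq, norm_g, norm_p,
    sum_sq_mul_sum_sq_mul_add_sub_one hg ht]

theorem sqrt_gram_div_sum_sq_smul {τ : ℝ} (hτ : τ ≠ 0) :
    √((∑ i, (τ • g) i ^ 2) * (∑ i, (τ • g) i ^ 2 * w i ^ 2) - (∑ i, (τ • g) i ^ 2 * w i) ^ 2)
        / ∑ i, (τ • g) i ^ 2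
      = √((∑ i, g i ^ 2) * (∑ i, g i ^ 2 * w i ^ 2) - (∑ i, g i ^ 2 * w i) ^ 2)
          / ∑ i, g i ^ 2 := by
  have scale : ∀ f : ι → ℝ, ∑ i, (τ • g) i ^ 2 * f i = τ ^ 2 * ∑ i, g i ^ 2 * f i := fun f => by
    simp only [Pi.smul_apply, smul_eq_mul, mul_sum]
    exact sum_congr rfl fun i _ => by ring
  have scale_one : ∑ i, (τ • g) i ^ 2 = τ ^ 2 * ∑ i, g i ^ 2 := by simpa using scale 1
  rw [scale w, scale (w · ^ 2), scale_one,
    show ∀ A B C : ℝ, τ ^ 2 * A * (τ ^ 2 * B) - (τ ^ 2 * C) ^ 2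
      = (τ ^ 2) ^ 2 * (A * B - C ^ 2) from fun _ _ _ => by ring,
    Real.sqrt_mul (by positivity), Real.sqrt_sq (by positivity),
    mul_div_mul_left _ _ (pow_ne_zero 2 hτ)]

end Coordinates

theorem contact_points_of_parallel_tangent_hyperplanes_general
    (n : ℕ) (a : Fin n → ℝ)
    (t : (Fin n → ℝ) → ℝ)
    (ht : ∀ g : Fin n → ℝ,
      t g = (1 - ∑ i, (g i) ^ 2 * (a i) ^ 2) / ∑ i, (g i) ^ 2)
    (P : (Fin n → ℝ) → EuclideanSpace ℝ (Fin n))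
    (hP : ∀ g i, P g i = g i * ((a i) ^ 2 + t g))
    (d₁ d₂ : (Fin n → ℝ) → ℝ)
    (hd₁ : ∀ g, d₁ g = Metric.infDist (P g)
      {x : EuclideanSpace ℝ (Fin n) | ∑ i, g i * x i = 0})
    (hd₂ : ∀ g, d₂ g = Metric.infDist (P g)
      {x : EuclideanSpace ℝ (Fin n) | ∃ τ : ℝ, ∀ i, x i = τ * g i})
    (h : Fin n → ℝ) (hh : h ≠ 0) (hreg : ∀ i, (a i) ^ 2 + t h ≠ 0) :
    (∑ i, h i * P h i = 1) ∧
    (∑ i, (P h i) ^ 2 / ((a i) ^ 2 + t h) = 1) ∧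
    (∃ c : ℝ, ∀ i, P h i / ((a i) ^ 2 + t h) = c * h i) ∧
    d₁ h * d₂ h =
      Real.sqrt ((∑ i, (h i) ^ 2) * (∑ i, (h i) ^ 2 * (a i) ^ 4)
          - (∑ i, (h i) ^ 2 * (a i) ^ 2) ^ 2) / (∑ i, (h i) ^ 2) ∧
    (∀ τ : ℝ, τ ≠ 0 → d₁ (τ • h) * d₂ (τ • h) = d₁ h * d₂ h) := by
  have on_hyperplane : ∑ i, h i * P h i = 1 := by
    simpa only [hP] using sum_mul_mul_add_eq_one hh (ht h)
  have product : ∀ g : Fin n → ℝ, g ≠ 0 → d₁ g * d₂ g =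
      √((∑ i, g i ^ 2) * (∑ i, g i ^ 2 * (a i ^ 2) ^ 2) - (∑ i, g i ^ 2 * a i ^ 2) ^ 2)
        / ∑ i, g i ^ 2 := fun g hg => by
    rw [hd₁, hd₂]
    exact infDist_mul_infDist_of_eq_mul_add hg (ht g) (hP g)
  have normal_eq (i : Fin n) : P h i / (a i ^ 2 + t h) = h i := by
    rw [hP, mul_div_assoc, div_self (hreg i), mul_one]
  refine ⟨on_hyperplane, ?_, ⟨1, fun i => by rw [normal_eq, one_mul]⟩, ?_, fun τ hτ => ?_⟩
  · rw [← on_hyperplane]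
    exact Finset.sum_congr rfl fun i _ => by rw [sq, mul_div_assoc, normal_eq, mul_comm]
  · simpa only [← pow_mul] using product h hh
  · rw [product _ (smul_ne_zero hτ hh), product h hh, sqrt_gram_div_sum_sq_smul hτ]

/-- The point of contact `P(h)` of the hyperplane `⟨h, x⟩ = 1` with the unique
confocal quadric tangent to it satisfies: it lies on the hyperplane and on the
quadric `C(−t(h))` with normal proportional to `h`; the product of its distance
`d₁` to the parallel hyperplane through the origin and its distance `d₂` to the
line `ℝh` equals `√((∑h_i²)(∑h_i²a_i⁴) − (∑h_i²a_i²)²)/(∑h_i²)`, and this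
product is invariant under `h ↦ τh` (`τ ≠ 0`): the contact points of parallel
tangent hyperplanes lie on an equilateral hyperbola. -/
theorem contact_points_of_parallel_tangent_hyperplanes
    (n : ℕ) (hn : 1 ≤ n) (a : Fin n → ℝ) (ha : ∀ i, 0 < a i)
    (hmono : ∀ i j : Fin n, i < j → a j < a i)
    (t : (Fin n → ℝ) → ℝ)
    (ht : ∀ g : Fin n → ℝ,
      t g = (1 - ∑ i, (g i) ^ 2 * (a i) ^ 2) / ∑ i, (g i) ^ 2)
    (P : (Fin n → ℝ) → EuclideanSpace ℝ (Fin n))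
    (hP : ∀ g i, P g i = g i * ((a i) ^ 2 + t g))
    (d₁ d₂ : (Fin n → ℝ) → ℝ)
    (hd₁ : ∀ g, d₁ g = Metric.infDist (P g)
      {x : EuclideanSpace ℝ (Fin n) | ∑ i, g i * x i = 0})
    (hd₂ : ∀ g, d₂ g = Metric.infDist (P g)
      {x : EuclideanSpace ℝ (Fin n) | ∃ τ : ℝ, ∀ i, x i = τ * g i})
    (h : Fin n → ℝ) (hh : h ≠ 0) (hreg : ∀ i, (a i) ^ 2 + t h ≠ 0) :
    (∑ i, h i * P h i = 1) ∧
    (∑ i, (P h i) ^ 2 / ((a i) ^ 2 + t h) = 1) ∧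
    (∃ c : ℝ, ∀ i, P h i / ((a i) ^ 2 + t h) = c * h i) ∧
    d₁ h * d₂ h =
      Real.sqrt ((∑ i, (h i) ^ 2) * (∑ i, (h i) ^ 2 * (a i) ^ 4)
          - (∑ i, (h i) ^ 2 * (a i) ^ 2) ^ 2) / (∑ i, (h i) ^ 2) ∧
    (∀ τ : ℝ, τ ≠ 0 → d₁ (τ • h) * d₂ (τ • h) = d₁ h * d₂ h) :=
  contact_points_of_parallel_tangent_hyperplanes_general n a t ht P hP d₁ d₂ hd₁ hd₂ h hh hreg
end

section
/- Let 0 < a_n < ⋯ < a_1 and let x ∈ ℝⁿ have x_i ≠ 0 for every i. Then there exist n distinct real numbers λ_1, …, λ_n with a_{j+1}² < λ_j < a_j² for j = 1, …, n−1 and λ_n < a_n², such that Σ_{i=1}^n x_i²/(a_i² − λ_j) = 1 for every j ∈ {1, …, n}; that is, the point x lies on exactly one confocal quadric of each of the n types, and in particular on exactly one ellipsoid of the confocal family. -/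
/-!
For fixed `x`, the function `f(λ) = ∑ xᵢ² / (aᵢ² - λ)` is continuous away from the poles `aᵢ²`;
since every `xᵢ² > 0`, it tends to `+∞` as `λ` increases to a pole, to `-∞` as `λ` decreases to it,
and to `0` as `λ → -∞`. By the intermediate value theorem `f = 1` has a root in each gap
`(a_{j+1}², a_j²)` between consecutive poles and in `(-∞, a_n²)`. These roots interlace with the
poles, so they are distinct.
-/

open Filter Topology Set Finset

theorem exists_mem_Ico_eq_of_tendsto_nhdsLT_atTop {α δ : Type*} [ConditionallyCompleteLinearOrder α]
    [TopologicalSpace α] [OrderTopology α] [DenselyOrdered α] [LinearOrder δ] [TopologicalSpace δ]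
    [OrderClosedTopology δ] [NoMaxOrder δ] {f : α → δ} {u q : α} {y : δ} (huq : u < q)
    (hf : ContinuousOn f (Ico u q)) (hfu : f u ≤ y) (hq : Tendsto f (𝓝[<] q) atTop) :
    ∃ t ∈ Ico u q, f t = y := by
  have : (𝓝[<] q).NeBot := nhdsLT_neBot_of_exists_lt ⟨u, huq⟩
  obtain ⟨v, hyv, hv⟩ := ((hq.eventually (eventually_ge_atTop y)).and (Ioo_mem_nhdsLT huq)).exists
  exact hf.surjOn_Icc (left_mem_Ico.2 huq) (Ioo_subset_Ico_self hv) ⟨hfu, hyv⟩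

theorem tendsto_const_sub_nhdsLT (c : ℝ) : Tendsto (c - ·) (𝓝[<] c) (𝓝[>] 0) :=
  tendsto_nhdsWithin_of_tendsto_nhds_of_eventually_within _
    (((continuous_sub_left c).tendsto' c 0 (sub_self c)).mono_left nhdsWithin_le_nhds)
    (eventually_nhdsWithin_of_forall fun _ ht => mem_Ioi.2 (sub_pos.2 ht))

theorem tendsto_const_sub_nhdsGT (c : ℝ) : Tendsto (c - ·) (𝓝[>] c) (𝓝[<] 0) :=
  tendsto_nhdsWithin_of_tendsto_nhds_of_eventually_within _
    (((continuous_sub_left c).tendsto' c 0 (sub_self c)).mono_left nhdsWithin_le_nhds)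
    (eventually_nhdsWithin_of_forall fun _ ht => mem_Iio.2 (sub_neg.2 ht))

theorem tendsto_div_const_sub_nhdsLT {w : ℝ} (hw : 0 < w) (c : ℝ) :
    Tendsto (fun t => w / (c - t)) (𝓝[<] c) atTop := by
  simpa only [div_eq_mul_inv, Function.comp_def] using
    (tendsto_inv_nhdsGT_zero.comp (tendsto_const_sub_nhdsLT c)).const_mul_atTop hw

theorem tendsto_div_const_sub_nhdsGT {w : ℝ} (hw : 0 < w) (c : ℝ) :
    Tendsto (fun t => w / (c - t)) (𝓝[>] c) atBot := by
  simpa only [div_eq_mul_inv, Function.comp_def] using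
    (tendsto_inv_nhdsLT_zero.comp (tendsto_const_sub_nhdsGT c)).const_mul_atBot hw

/-- The left-hand side of the equation of the confocal quadric `C(t)` through `x`, with weights
`w i = xᵢ²` and poles `c i = aᵢ²`. -/
noncomputable def confocalSum {ι : Type*} [Fintype ι] (w c : ι → ℝ) (t : ℝ) : ℝ :=
  ∑ i, w i / (c i - t)

namespace confocalSum

variable {ι : Type*} [Fintype ι] {w c : ι → ℝ}

theorem continuousOn {s : Set ℝ} (hs : ∀ i, c i ∉ s) : ContinuousOn (confocalSum w c) s :=
  continuousOn_finsetSum _ fun i _ => continuousOn_const.div (continuousOn_const.sub continuousOn_id)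
    fun _ ht => sub_ne_zero.2 fun h => hs i (h ▸ ht)

theorem tendsto_atBot_zero : Tendsto (confocalSum w c) atBot (𝓝 0) := by
  unfold confocalSum
  simpa using tendsto_finsetSum (f := fun i t => w i / (c i - t)) univ fun i _ =>
    tendsto_const_nhds.div_atTop (tendsto_atTop_add_const_left _ (c i) tendsto_neg_atBot_atTop)

section DecidableEq

variable [DecidableEq ι]

theorem eq_add_sum_erase (i₀ : ι) (t : ℝ) :
    confocalSum w c t = w i₀ / (c i₀ - t) + ∑ i ∈ univ.erase i₀, w i / (c i - t) :=
  (add_sum_erase _ _ (mem_univ i₀)).symm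

theorem continuousAt_sum_erase (hc : Function.Injective c) (i₀ : ι) :
    ContinuousAt (fun t => ∑ i ∈ univ.erase i₀, w i / (c i - t)) (c i₀) :=
  tendsto_finsetSum _ fun _ hi => continuousAt_const.div (continuousAt_const.sub continuousAt_id)
    (sub_ne_zero.2 (hc.ne (ne_of_mem_erase hi)))

end DecidableEq

theorem tendsto_nhdsLT (hc : Function.Injective c) {i₀ : ι} (hw : 0 < w i₀) :
    Tendsto (confocalSum w c) (𝓝[<] c i₀) atTop := by
  classical
  refine ((tendsto_div_const_sub_nhdsLT hw (c i₀)).atTop_add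
    ((continuousAt_sum_erase (w := w) hc i₀).tendsto.mono_left nhdsWithin_le_nhds)).congr fun t => ?_
  exact (eq_add_sum_erase i₀ t).symm

theorem tendsto_nhdsGT (hc : Function.Injective c) {i₀ : ι} (hw : 0 < w i₀) :
    Tendsto (confocalSum w c) (𝓝[>] c i₀) atBot := by
  classical
  refine ((tendsto_div_const_sub_nhdsGT hw (c i₀)).atBot_add
    ((continuousAt_sum_erase (w := w) hc i₀).tendsto.mono_left nhdsWithin_le_nhds)).congr fun t => ?_
  exact (eq_add_sum_erase i₀ t).symm

theorem exists_mem_Ioo_eq (hc : Function.Injective c) {i k : ι} (hwi : 0 < w i) (hwk : 0 < w k)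
    (hki : c k < c i) (hgap : ∀ l, c l ∉ Ioo (c k) (c i)) (y : ℝ) :
    ∃ t ∈ Ioo (c k) (c i), confocalSum w c t = y := by
  obtain ⟨u, hfu, hu⟩ :=
    (((tendsto_nhdsGT hc hwk).eventually (eventually_le_atBot y)).and (Ioo_mem_nhdsGT hki)).exists
  have hsub : Ico u (c i) ⊆ Ioo (c k) (c i) := Ico_subset_Ioo_left hu.1
  obtain ⟨t, ht, hft⟩ := exists_mem_Ico_eq_of_tendsto_nhdsLT_atTop hu.2
    ((continuousOn hgap).mono hsub) hfu (tendsto_nhdsLT hc hwi)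
  exact ⟨t, hsub ht, hft⟩

theorem exists_lt_eq (hc : Function.Injective c) {i : ι} (hwi : 0 < w i) (hmin : ∀ l, c i ≤ c l)
    {y : ℝ} (hy : 0 < y) : ∃ t < c i, confocalSum w c t = y := by
  obtain ⟨u, hfu, hu⟩ :=
    (((tendsto_atBot_zero (w := w) (c := c)).eventually_lt_const hy).and
      (eventually_lt_atBot (c i))).exists
  obtain ⟨t, ht, hft⟩ := exists_mem_Ico_eq_of_tendsto_nhdsLT_atTop hu
    (continuousOn (c := c) fun l hl => (hl.2.trans_le (hmin l)).false) hfu.le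
    (tendsto_nhdsLT hc hwi)
  exact ⟨t, ht.2, hft⟩

end confocalSum

theorem exists_interlacing_confocalSum_eq_one {n : ℕ} {w c : Fin n → ℝ} (hc : StrictAnti c)
    (hw : ∀ i, 0 < w i) (j : Fin n) :
    ∃ t, t < c j ∧ (∀ hj : (j : ℕ) + 1 < n, c ⟨(j : ℕ) + 1, hj⟩ < t) ∧ confocalSum w c t = 1 := by
  by_cases hj : (j : ℕ) + 1 < n
  · set k : Fin n := ⟨(j : ℕ) + 1, hj⟩
    have hjk : j < k := Fin.lt_def.2 (Nat.lt_succ_self j)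
    have hgap : ∀ l, c l ∉ Ioo (c k) (c j) := fun l hl => by
      rcases le_or_gt l j with hlj | hjl
      · exact (hc.antitone hlj).not_gt hl.2
      · exact (hc.antitone (Fin.le_def.2 hjl : k ≤ l)).not_gt hl.1
    obtain ⟨t, ht, hft⟩ :=
      confocalSum.exists_mem_Ioo_eq hc.injective (hw j) (hw k) (hc hjk) hgap 1
    exact ⟨t, ht.2, fun _ => ht.1, hft⟩
  · have hmin : ∀ l, c j ≤ c l := fun l => hc.antitone (Fin.le_def.2 (by omega))
    obtain ⟨t, ht, hft⟩ := confocalSum.exists_lt_eq hc.injective (hw j) hmin one_pos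
    exact ⟨t, ht, fun hj' => absurd hj' hj, hft⟩

theorem strictAnti_of_interlaces {n : ℕ} {c lam : Fin n → ℝ} (hc : Antitone c)
    (hlt : ∀ j, lam j < c j)
    (hgt : ∀ j : Fin n, ∀ hj : (j : ℕ) + 1 < n, c ⟨(j : ℕ) + 1, hj⟩ < lam j) :
    StrictAnti lam := by
  intro j₁ j₂ h
  have hj : (j₁ : ℕ) + 1 < n := by have := Fin.lt_def.1 h; omega
  calc lam j₂ < c j₂ := hlt j₂
    _ ≤ c ⟨(j₁ : ℕ) + 1, hj⟩ := hc (Fin.le_def.2 (Fin.lt_def.1 h))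
    _ < lam j₁ := hgt j₁ hj

/-- Through every point with all coordinates nonzero there pass exactly `n`
confocal quadrics of the family `∑ x_i²/(a_i² − λ) = 1`, one of each type:
there are `n` distinct parameters `λ_j` with `a_{j+1}² < λ_j < a_j²` for
`j = 1, …, n−1` and `λ_n < a_n²`, each of whose quadrics contains the point. -/
theorem confocal_quadrics_through_a_point
    (n : ℕ) (a : Fin n → ℝ) (ha : ∀ i, 0 < a i)
    (hmono : ∀ i j : Fin n, i < j → a j < a i)
    (x : Fin n → ℝ) (hx : ∀ i, x i ≠ 0) :
    ∃ lam : Fin n → ℝ,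
      Function.Injective lam ∧
      (∀ j : Fin n, lam j < (a j) ^ 2) ∧
      (∀ j : Fin n, ∀ hj : (j : ℕ) + 1 < n, (a ⟨(j : ℕ) + 1, hj⟩) ^ 2 < lam j) ∧
      (∀ j : Fin n, ∑ i, (x i) ^ 2 / ((a i) ^ 2 - lam j) = 1) := by
  have hc : StrictAnti fun i => a i ^ 2 := fun i j hij =>
    pow_lt_pow_left₀ (hmono i j hij) (ha j).le two_ne_zero
  choose lam hlt hgt hsum using
    exists_interlacing_confocalSum_eq_one hc (fun i => sq_pos_of_ne_zero (hx i))
  exact ⟨lam, (strictAnti_of_interlaces hc.antitone hlt hgt).injective, hlt, hgt, hsum⟩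
end

section
/- Let 0 < a_n < ⋯ < a_1, let λ_1, …, λ_n be distinct real numbers with a_i² ≠ λ_j for all i, j, and let x ∈ ℝⁿ satisfy Σ_{i=1}^n x_i²/(a_i² − λ_j) = 1 for every j ∈ {1, …, n} (so x lies on all n confocal quadrics C(λ_j)). Then the coordinates of x are determined by the confocal parameters: for every i, x_i² · Π_{k ≠ i} (a_i² − a_k²) = Π_{j=1}^n (a_i² − λ_j). -/
/-!
Put `c_k = a_k²` and `w_k = x_k²`, and let `P(t) = ∏_k (t - c_k)` and `L(t) = ∏_j (t - λ_j)`.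
Clearing denominators in `∑_m w_m / (t - c_m)` gives a numerator `S` of degree `< n`, and the
hypothesis says that `∑_m w_m / (λ_j - c_m) = -1`, i.e. that the monic polynomial `P + S` of
degree `n` vanishes at the `n` distinct points `λ_j`. Hence `L = P + S`, and evaluating this
identity at `t = c_i` yields the claim.
-/

open Polynomial Finset Lagrange

section PartialFractionNumerator

variable {R ι : Type*} [CommRing R]

theorem degree_nodal_sub_nodal_lt [Nontrivial R] (s : Finset ι) (u v : ι → R) :
    (nodal s u - nodal s v).degree < #s := by
  rw [← degree_nodal (v := u)]
  exact degree_sub_lt_left (by rw [degree_nodal, degree_nodal]) nodal_ne_zero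
    (by rw [nodal_monic.leadingCoeff, nodal_monic.leadingCoeff])

variable [DecidableEq ι]

/-- The numerator of `∑_{m ∈ s} w_m / (X - c_m)` over the common denominator `nodal s c`. -/
noncomputable def partialFractionNumerator (s : Finset ι) (w c : ι → R) : R[X] :=
  ∑ m ∈ s, C (w m) * nodal (s.erase m) c

theorem degree_partialFractionNumerator_lt [Nontrivial R] (s : Finset ι) (w c : ι → R) :
    (partialFractionNumerator s w c).degree < #s := by
  refine (degree_sum_le _ _).trans_lt ((Finset.sup_lt_iff (WithBot.bot_lt_coe _)).2 ?_)
  intro m hm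
  calc (C (w m) * nodal (s.erase m) c).degree
      ≤ (C (w m)).degree + (nodal (s.erase m) c).degree := degree_mul_le _ _
    _ ≤ 0 + ((#s - 1 : ℕ) : WithBot ℕ) := by
        gcongr
        · exact degree_C_le
        · rw [degree_nodal, card_erase_of_mem hm]
    _ < #s := by
        rw [zero_add]
        exact_mod_cast Nat.sub_lt (card_pos.2 ⟨m, hm⟩) one_pos

theorem eval_partialFractionNumerator_at_node {s : Finset ι} {i : ι} (hi : i ∈ s)
    (w c : ι → R) :
    (partialFractionNumerator s w c).eval (c i) = w i * (nodal (s.erase i) c).eval (c i) := by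
  rw [partialFractionNumerator, eval_finsetSum, ← add_sum_erase _ _ hi, eval_mul, eval_C,
    add_eq_left]
  exact sum_eq_zero fun m hm => by
    rw [eval_mul, eval_nodal_at_node (mem_erase.2 ⟨(mem_erase.1 hm).1.symm, hi⟩), mul_zero]

end PartialFractionNumerator

section Field

variable {K ι : Type*} [Field K] [DecidableEq ι]

theorem eval_partialFractionNumerator {s : Finset ι} (w c : ι → K) {t : K}
    (ht : ∀ m ∈ s, t ≠ c m) :
    (partialFractionNumerator s w c).eval t =
      (nodal s c).eval t * ∑ m ∈ s, w m / (t - c m) := by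
  rw [partialFractionNumerator, eval_finsetSum, mul_sum]
  refine sum_congr rfl fun m hm => ?_
  have hsub : t - c m ≠ 0 := sub_ne_zero.2 (ht m hm)
  rw [eval_mul, eval_C, nodal_eq_mul_nodal_erase hm, eval_mul, eval_sub, eval_X, eval_C]
  field_simp

theorem nodal_eq_nodal_add_partialFractionNumerator {s : Finset ι} {w c lam : ι → K}
    (hlam : Set.InjOn lam s) (hreg : ∀ i ∈ s, ∀ j ∈ s, c i ≠ lam j)
    (hsum : ∀ j ∈ s, ∑ i ∈ s, w i / (c i - lam j) = 1) :
    nodal s lam = nodal s c + partialFractionNumerator s w c := by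
  refine eq_of_degree_sub_lt_of_eval_index_eq s hlam ?_ fun j hj => ?_
  · rw [sub_add_eq_sub_sub]
    exact (degree_sub_le _ _).trans_lt
      (max_lt (degree_nodal_sub_nodal_lt s lam c) (degree_partialFractionNumerator_lt s w c))
  · have hnode : ∀ m ∈ s, lam j ≠ c m := fun m hm => (hreg m hm j hj).symm
    have hflip : ∑ m ∈ s, w m / (lam j - c m) = -1 := by
      rw [← hsum j hj, ← sum_neg_distrib]
      exact sum_congr rfl fun m _ => by rw [← neg_sub, div_neg]
    rw [eval_nodal_at_node hj, eval_add, eval_partialFractionNumerator w c hnode, hflip]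
    ring

end Field

theorem coordinates_from_confocal_parameters_general
    (n : ℕ) (a : Fin n → ℝ)
    (lam : Fin n → ℝ) (hinj : Function.Injective lam)
    (hreg : ∀ i j, (a i) ^ 2 ≠ lam j)
    (x : Fin n → ℝ)
    (hx : ∀ j, ∑ i, (x i) ^ 2 / ((a i) ^ 2 - lam j) = 1) :
    ∀ i, (x i) ^ 2 * ∏ k ∈ Finset.univ.erase i, ((a i) ^ 2 - (a k) ^ 2)
        = ∏ j, ((a i) ^ 2 - lam j) := by
  intro i
  have hid := nodal_eq_nodal_add_partialFractionNumerator (s := univ) (w := fun k => x k ^ 2)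
    (c := fun k => a k ^ 2) hinj.injOn (fun k _ j _ => hreg k j) fun j _ => hx j
  have heval := congrArg (eval (a i ^ 2)) hid
  rw [eval_add, eval_nodal_at_node (v := fun k => a k ^ 2) (mem_univ i), zero_add,
    eval_partialFractionNumerator_at_node (c := fun k => a k ^ 2) (mem_univ i), eval_nodal,
    eval_nodal] at heval
  exact heval.symm

/-- If the point `x` lies on all `n` confocal quadrics `C(λ_j)`, then its
coordinates are determined by the confocal parameters:
`x_i² · Π_{k ≠ i} (a_i² − a_k²) = Π_j (a_i² − λ_j)`. -/
theorem coordinates_from_confocal_parameters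
    (n : ℕ) (a : Fin n → ℝ) (ha : ∀ i, 0 < a i)
    (hmono : ∀ i j : Fin n, i < j → a j < a i)
    (lam : Fin n → ℝ) (hinj : Function.Injective lam)
    (hreg : ∀ i j, (a i) ^ 2 ≠ lam j)
    (x : Fin n → ℝ)
    (hx : ∀ j, ∑ i, (x i) ^ 2 / ((a i) ^ 2 - lam j) = 1) :
    ∀ i, (x i) ^ 2 * ∏ k ∈ Finset.univ.erase i, ((a i) ^ 2 - (a k) ^ 2)
        = ∏ j, ((a i) ^ 2 - lam j) :=
  coordinates_from_confocal_parameters_general n a lam hinj hreg x hx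
end

section
/- Let 0 < a_n < ⋯ < a_1, let λ_1, …, λ_n be distinct real numbers with a_i² ≠ λ_j for all i, j, and let x ∈ ℝⁿ satisfy Σ_{i=1}^n x_i²/(a_i² − λ_j) = 1 for every j ∈ {1, …, n}. Then the squared Euclidean norm of x is ‖x‖² = Σ_{i=1}^n a_i² − Σ_{j=1}^n λ_j. -/
/-!
With `A = ∏ i, (X - a_i²)`, clearing denominators turns the `n` equations into the statement
that every `λ_j` is a root of the monic degree-`n` polynomial `A + ∑ i, x_i² A / (X - a_i²)`.
Having the `n` distinct roots `λ_j`, it equals `∏ j, (X - λ_j)`, and comparing the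
coefficients of `X ^ (n - 1)` gives `-∑ a_i² + ∑ x_i² = -∑ λ_j`.
-/

open Polynomial Finset

namespace Polynomial

variable {R ι : Type*} [CommRing R] [Fintype ι]

theorem degree_prod_X_sub_C_sub_prod_X_sub_C_lt [Nontrivial R] (c μ : ι → R) :
    (∏ i, (X - C (c i)) - ∏ i, (X - C (μ i))).degree < (Fintype.card ι : WithBot ℕ) := by
  have hmonic (v : ι → R) : (∏ i, (X - C (v i))).Monic :=
    monic_prod_of_monic _ _ fun i _ => monic_X_sub_C _
  have hdeg (v : ι → R) : (∏ i, (X - C (v i))).degree = (Fintype.card ι : WithBot ℕ) := by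
    rw [degree_eq_natDegree (hmonic v).ne_zero, natDegree_finsetProd_X_sub_C_eq_card, card_univ]
  rw [← hdeg c]
  exact degree_sub_lt_left ((hdeg c).trans (hdeg μ).symm) (hmonic c).ne_zero
    ((hmonic c).leadingCoeff.trans (hmonic μ).leadingCoeff.symm)

variable [DecidableEq ι]

theorem degree_sum_C_mul_prod_erase_X_sub_C_lt (w c : ι → R) :
    (∑ i, C (w i) * ∏ k ∈ univ.erase i, (X - C (c k))).degree < (Fintype.card ι : WithBot ℕ) := by
  nontriviality R
  refine (degree_sum_le _ _).trans_lt ((Finset.sup_lt_iff (WithBot.bot_lt_coe _)).2 fun i _ => ?_)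
  calc _ ≤ (∏ k ∈ univ.erase i, (X - C (c k))).degree := by
        rw [← smul_eq_C_mul]; exact degree_smul_le _ _
    _ < (Fintype.card ι : WithBot ℕ) := by
      rw [degree_eq_natDegree (monic_prod_of_monic _ _ fun k _ => monic_X_sub_C _).ne_zero,
        natDegree_finsetProd_X_sub_C_eq_card, card_erase_of_mem (mem_univ i), card_univ]
      exact_mod_cast Nat.sub_lt (Fintype.card_pos_iff.2 ⟨i⟩) one_pos

theorem coeff_sum_C_mul_prod_erase_X_sub_C (w c : ι → R) :
    (∑ i, C (w i) * ∏ k ∈ univ.erase i, (X - C (c k))).coeff (Fintype.card ι - 1) = ∑ i, w i := by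
  nontriviality R
  rw [finsetSum_coeff]
  refine sum_congr rfl fun i _ => ?_
  have hmonic : (∏ k ∈ univ.erase i, (X - C (c k))).Monic :=
    monic_prod_of_monic _ _ fun k _ => monic_X_sub_C _
  have hdeg : (∏ k ∈ univ.erase i, (X - C (c k))).natDegree = Fintype.card ι - 1 := by
    rw [natDegree_finsetProd_X_sub_C_eq_card, card_erase_of_mem (mem_univ i), card_univ]
  rw [coeff_C_mul, ← hdeg, hmonic.coeff_natDegree, mul_one]

theorem eval_sum_C_mul_prod_erase_X_sub_C {K : Type*} [Field K] (w c : ι → K) {t : K}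
    (ht : ∀ i, c i ≠ t) :
    (∑ i, C (w i) * ∏ k ∈ univ.erase i, (X - C (c k))).eval t =
      (∏ i, (t - c i)) * ∑ i, w i / (t - c i) := by
  simp only [eval_finsetSum, eval_mul, eval_C, eval_prod, eval_sub, eval_X, mul_sum]
  refine sum_congr rfl fun i _ => ?_
  rw [← mul_prod_erase univ _ (mem_univ i)]
  field_simp [sub_ne_zero.2 (ht i).symm]

end Polynomial

theorem sum_eq_sum_sub_sum_of_forall_sum_div_sub_eq_one {K ι : Type*} [Field K] [Fintype ι]
    (c w μ : ι → K) (hμ : Function.Injective μ) (hne : ∀ i j, c i ≠ μ j)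
    (h : ∀ j, ∑ i, w i / (c i - μ j) = 1) :
    ∑ i, w i = ∑ i, c i - ∑ j, μ j := by
  classical
  cases isEmpty_or_nonempty ι
  · simp
  set A := ∏ i, (X - C (c i))
  set S := ∑ i, C (w i) * ∏ k ∈ univ.erase i, (X - C (c k))
  set B := ∏ j, (X - C (μ j))
  have hroot (j : ι) : (A + S).eval (μ j) = B.eval (μ j) := by
    have hsum : ∑ i, w i / (μ j - c i) = -1 := by
      rw [← h j, ← sum_neg_distrib]
      exact sum_congr rfl fun i _ => by rw [← div_neg, neg_sub]
    have hB : B.eval (μ j) = 0 := by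
      rw [eval_prod]
      exact prod_eq_zero (mem_univ j) (by rw [eval_sub, eval_X, eval_C, sub_self])
    rw [eval_add, eval_sum_C_mul_prod_erase_X_sub_C w c fun i => hne i j, hsum, hB, eval_prod]
    simp only [eval_sub, eval_X, eval_C]
    ring
  have hAS : A + S = B := by
    refine eq_of_degree_sub_lt_of_eval_index_eq univ hμ.injOn ?_ fun j _ => hroot j
    rw [add_sub_right_comm, card_univ]
    exact (degree_add_le _ _).trans_lt (max_lt (degree_prod_X_sub_C_sub_prod_X_sub_C_lt c μ)
      (degree_sum_C_mul_prod_erase_X_sub_C_lt w c))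
  have hcoeff (v : ι → K) : (∏ i, (X - C (v i))).coeff (Fintype.card ι - 1) = -∑ i, v i := by
    rw [← card_univ]
    exact prod_X_sub_C_coeff_card_pred univ v univ_nonempty.card_pos
  have hcoeffAS := congrArg (coeff · (Fintype.card ι - 1)) hAS
  simp only [coeff_add, A, B, S, hcoeff, coeff_sum_C_mul_prod_erase_X_sub_C] at hcoeffAS
  linear_combination hcoeffAS

theorem norm_sq_from_confocal_parameters_general
    (n : ℕ) (a : Fin n → ℝ)
    (lam : Fin n → ℝ) (hinj : Function.Injective lam)
    (hreg : ∀ i j, (a i) ^ 2 ≠ lam j)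
    (x : EuclideanSpace ℝ (Fin n))
    (hx : ∀ j, ∑ i, (x i) ^ 2 / ((a i) ^ 2 - lam j) = 1) :
    ‖x‖ ^ 2 = ∑ i, (a i) ^ 2 - ∑ j, lam j := by
  rw [EuclideanSpace.norm_sq_eq]
  simp only [Real.norm_eq_abs, sq_abs]
  exact sum_eq_sum_sub_sum_of_forall_sum_div_sub_eq_one _ _ lam hinj hreg hx

/-- If the point `x` lies on all `n` confocal quadrics `C(λ_j)`, then its
squared Euclidean norm is `‖x‖² = ∑ a_i² − ∑ λ_j`. -/
theorem norm_sq_from_confocal_parameters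
    (n : ℕ) (a : Fin n → ℝ) (ha : ∀ i, 0 < a i)
    (hmono : ∀ i j : Fin n, i < j → a j < a i)
    (lam : Fin n → ℝ) (hinj : Function.Injective lam)
    (hreg : ∀ i j, (a i) ^ 2 ≠ lam j)
    (x : EuclideanSpace ℝ (Fin n))
    (hx : ∀ j, ∑ i, (x i) ^ 2 / ((a i) ^ 2 - lam j) = 1) :
    ‖x‖ ^ 2 = ∑ i, (a i) ^ 2 - ∑ j, lam j :=
  norm_sq_from_confocal_parameters_general n a lam hinj hreg x hx
end

section
/- Let a_1, …, a_n > 0, let ν, λ, μ ∈ ℝ be pairwise distinct with a_i² ∉ {ν, λ, μ} for all i, and let x ∈ ℝⁿ satisfy Σ_{i=1}^n x_i²/(a_i² − ν) = 1, Σ_{i=1}^n x_i²/(a_i² − λ) = 1, and Σ_{i=1}^n x_i²/(a_i² − μ) = 1. Then Σ_{i=1}^n x_i²/((a_i² − ν)(a_i² − λ)(a_i² − μ)) = 0. (Geometrically, with ν = 0: the normals at x of the confocals C(λ) and C(μ) are conjugate directions with respect to the ellipsoid Σ x_i²/a_i² = 1, so the axes of the central section of the ellipsoid parallel to its tangent hyperplane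 at x are parallel to the normals of the confocals through x.) -/
/-! The function `t ↦ 1/((t - ν)(t - λ)(t - μ))` splits into partial fractions
`∑ 1/((ν - λ)(ν - μ)(t - ν))` (cyclically), so the sum in question is a combination of the
three quadric equations with coefficients `1/((ν - λ)(ν - μ))`, …, which all equal `1` there;
the coefficients themselves sum to zero, being the leading coefficient of the Lagrange
interpolation of the constant `1` at three nodes. -/

section PartialFractions

variable {K : Type*} [Field K] {p q r : K}

theorem div_mul_mul_sub_eq_partial_fractions (hpq : p ≠ q) (hpr : p ≠ r) (hqr : q ≠ r)
    {t : K} (htp : t ≠ p) (htq : t ≠ q) (htr : t ≠ r) (w : K) :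
    w / ((t - p) * (t - q) * (t - r)) =
      ((p - q) * (p - r))⁻¹ * (w / (t - p)) + ((q - p) * (q - r))⁻¹ * (w / (t - q))
        + ((r - p) * (r - q))⁻¹ * (w / (t - r)) := by
  field_simp [sub_ne_zero.2 hpq, sub_ne_zero.2 hpr, sub_ne_zero.2 hqr, sub_ne_zero.2 hpq.symm,
    sub_ne_zero.2 hpr.symm, sub_ne_zero.2 hqr.symm, sub_ne_zero.2 htp, sub_ne_zero.2 htq,
    sub_ne_zero.2 htr]
  ring

theorem inv_mul_sub_cyclic_sum_eq_zero (hpq : p ≠ q) (hpr : p ≠ r)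
    (hqr : q ≠ r) :
    ((p - q) * (p - r))⁻¹ + ((q - p) * (q - r))⁻¹ + ((r - p) * (r - q))⁻¹ = 0 := by
  field_simp [sub_ne_zero.2 hpq, sub_ne_zero.2 hpr, sub_ne_zero.2 hqr, sub_ne_zero.2 hpq.symm,
    sub_ne_zero.2 hpr.symm, sub_ne_zero.2 hqr.symm]
  ring

theorem sum_div_mul_mul_sub_eq {ι : Type*} (s : Finset ι) (w t : ι → K)
    (hpq : p ≠ q) (hpr : p ≠ r) (hqr : q ≠ r)
    (htp : ∀ i, t i ≠ p) (htq : ∀ i, t i ≠ q) (htr : ∀ i, t i ≠ r) :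
    ∑ i ∈ s, w i / ((t i - p) * (t i - q) * (t i - r)) =
      ((p - q) * (p - r))⁻¹ * ∑ i ∈ s, w i / (t i - p)
        + ((q - p) * (q - r))⁻¹ * ∑ i ∈ s, w i / (t i - q)
        + ((r - p) * (r - q))⁻¹ * ∑ i ∈ s, w i / (t i - r) := by
  simp only [Finset.mul_sum, ← Finset.sum_add_distrib]
  exact Finset.sum_congr rfl fun i _ ↦
    div_mul_mul_sub_eq_partial_fractions hpq hpr hqr (htp i) (htq i) (htr i) (w i)

end PartialFractions

theorem central_section_axes_conjugacy_general
    (n : ℕ) (a : Fin n → ℝ)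
    (nu lam mu : ℝ) (hnl : nu ≠ lam) (hnm : nu ≠ mu) (hlm : lam ≠ mu)
    (hn' : ∀ i, (a i) ^ 2 ≠ nu) (hl : ∀ i, (a i) ^ 2 ≠ lam)
    (hm : ∀ i, (a i) ^ 2 ≠ mu)
    (x : Fin n → ℝ)
    (h0 : ∑ i, (x i) ^ 2 / ((a i) ^ 2 - nu) = 1)
    (h1 : ∑ i, (x i) ^ 2 / ((a i) ^ 2 - lam) = 1)
    (h2 : ∑ i, (x i) ^ 2 / ((a i) ^ 2 - mu) = 1) :
    ∑ i, (x i) ^ 2 / (((a i) ^ 2 - nu) * ((a i) ^ 2 - lam) * ((a i) ^ 2 - mu))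
      = 0 := by
  rw [sum_div_mul_mul_sub_eq _ _ _ hnl hnm hlm hn' hl hm, h0, h1, h2, mul_one, mul_one,
    mul_one]
  exact inv_mul_sub_cyclic_sum_eq_zero hnl hnm hlm

/-- If a point lies on three pairwise distinct confocal quadrics `C(ν)`, `C(λ)`,
`C(μ)`, then `∑ x_i²/((a_i² − ν)(a_i² − λ)(a_i² − μ)) = 0`.  With `ν = 0` this
says that the normals at `x` of `C(λ)` and `C(μ)` are conjugate directions with
respect to the ellipsoid `∑ x_i²/a_i² = 1`, so the axes of the central section
of the ellipsoid parallel to its tangent hyperplane at `x` are parallel to the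
normals of the confocals through `x`. -/
theorem central_section_axes_conjugacy
    (n : ℕ) (a : Fin n → ℝ) (ha : ∀ i, 0 < a i)
    (nu lam mu : ℝ) (hnl : nu ≠ lam) (hnm : nu ≠ mu) (hlm : lam ≠ mu)
    (hn' : ∀ i, (a i) ^ 2 ≠ nu) (hl : ∀ i, (a i) ^ 2 ≠ lam)
    (hm : ∀ i, (a i) ^ 2 ≠ mu)
    (x : Fin n → ℝ)
    (h0 : ∑ i, (x i) ^ 2 / ((a i) ^ 2 - nu) = 1)
    (h1 : ∑ i, (x i) ^ 2 / ((a i) ^ 2 - lam) = 1)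
    (h2 : ∑ i, (x i) ^ 2 / ((a i) ^ 2 - mu) = 1) :
    ∑ i, (x i) ^ 2 / (((a i) ^ 2 - nu) * ((a i) ^ 2 - lam) * ((a i) ^ 2 - mu))
      = 0 :=
  central_section_axes_conjugacy_general n a nu lam mu hnl hnm hlm hn' hl hm x h0 h1 h2
end

section
/- Let a_1, …, a_n > 0 and let λ ≠ 0 be a real number with a_i² ≠ λ for all i. Suppose x ∈ ℝⁿ satisfies Σ_{i=1}^n x_i²/a_i² = 1 and Σ_{i=1}^n x_i²/(a_i² − λ) = 1. Then Σ_{i=1}^n x_i²/(a_i² (a_i² − λ)²) = (1/λ) · Σ_{i=1}^n x_i²/(a_i² − λ)². Consequently, the radius ρ of the ellipsoid Σ x_i²/a_i² = 1 in the direction of the normal n_λ(x) = (x_i/(a_i² − λ))_i of the confocal C(λ) at x (i.e., the ρ > 0 with ρ·n_λ(x)/‖n_λ(x)‖ on the ellipsoid) satisfies ρ² = λ: the squared semi-axes of the central section of the ellipsoid parallel to its tangent hyperplane at x are the confocal parameters of the confocals through x. -/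
/-!
Partial fractions give `1/(t(t-λ)²) = λ⁻¹/(t-λ)² - λ⁻²/(t-λ) + λ⁻²/t`. Weighting by `x_i²` at
`t = a_i²` and summing, the last two terms cancel because `x` lies on both the ellipsoid and
`C(λ)`. The squared radius of the ellipsoid in the direction of a unit vector `u` is
`1 / ∑ u_i²/a_i²`, and for `u = n_λ(x)/‖n_λ(x)‖` the identity makes this sum `λ⁻¹`.
-/

open Finset

noncomputable def confocalNormal {ι : Type*} (a : ι → ℝ) (lam : ℝ) (x : ι → ℝ) (i : ι) : ℝ :=
  x i / (a i ^ 2 - lam)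

lemma div_mul_sub_sq_eq {t lam : ℝ} (c : ℝ) (ht : t ≠ 0) (hlam : lam ≠ 0) (htlam : t ≠ lam) :
    c / (t * (t - lam) ^ 2)
      = 1 / lam * (c / (t - lam) ^ 2) - 1 / lam ^ 2 * (c / (t - lam)) + 1 / lam ^ 2 * (c / t) := by
  have : t - lam ≠ 0 := sub_ne_zero.2 htlam
  field_simp
  ring

lemma sum_div_mul_sub_sq_eq {ι : Type*} (s : Finset ι) {c t : ι → ℝ} {lam : ℝ}
    (ht : ∀ i ∈ s, t i ≠ 0) (hlam : lam ≠ 0) (htlam : ∀ i ∈ s, t i ≠ lam)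
    (h : ∑ i ∈ s, c i / t i = ∑ i ∈ s, c i / (t i - lam)) :
    ∑ i ∈ s, c i / (t i * (t i - lam) ^ 2) = 1 / lam * ∑ i ∈ s, c i / (t i - lam) ^ 2 := by
  rw [sum_congr rfl fun i hi => div_mul_sub_sq_eq (c i) (ht i hi) hlam (htlam i hi),
    sum_add_distrib, sum_sub_distrib, ← mul_sum, ← mul_sum, ← mul_sum, h]
  ring

lemma sum_sq_mul_div_sqrt_sum_sq_div {ι : Type*} (s : Finset ι) (ρ : ℝ) (v w : ι → ℝ) :
    ∑ i ∈ s, (ρ * v i / √(∑ j ∈ s, v j ^ 2)) ^ 2 / w i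
      = (ρ ^ 2 / ∑ j ∈ s, v j ^ 2) * ∑ i ∈ s, v i ^ 2 / w i := by
  rw [mul_sum]
  refine sum_congr rfl fun i _ => ?_
  rw [div_pow, mul_pow, Real.sq_sqrt (sum_nonneg fun j _ => sq_nonneg (v j))]
  ring

lemma sq_confocalNormal_div_sq {ι : Type*} (a : ι → ℝ) (lam : ℝ) (x : ι → ℝ) (i : ι) :
    confocalNormal a lam x i ^ 2 / a i ^ 2 = x i ^ 2 / (a i ^ 2 * (a i ^ 2 - lam) ^ 2) := by
  rw [confocalNormal, div_pow, div_div, mul_comm]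

section confocalNormal

variable {ι : Type*} [Fintype ι] {a : ι → ℝ} {lam : ℝ} {x : ι → ℝ}

lemma sum_sq_confocalNormal :
    ∑ i, confocalNormal a lam x i ^ 2 = ∑ i, x i ^ 2 / (a i ^ 2 - lam) ^ 2 := by
  simp only [confocalNormal, div_pow]

/-- A point of `C(λ)` is not the origin, so its normal does not vanish. -/
lemma sum_sq_confocalNormal_ne_zero (hx : ∑ i, x i ^ 2 / (a i ^ 2 - lam) = 1) :
    ∑ i, confocalNormal a lam x i ^ 2 ≠ 0 := by
  intro h
  have hzero : ∀ i, confocalNormal a lam x i = 0 := fun i =>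
    pow_eq_zero_iff two_ne_zero |>.1 <|
      (sum_eq_zero_iff_of_nonneg fun j _ => sq_nonneg _).1 h i (mem_univ i)
  have : ∑ i, x i ^ 2 / (a i ^ 2 - lam) = ∑ i, x i * confocalNormal a lam x i := by
    simp only [confocalNormal, mul_div_assoc, sq]
  simp [this, hzero] at hx

end confocalNormal

/-- If `x` lies on the ellipsoid `∑ x_i²/a_i² = 1` and on the confocal `C(λ)`,
then `∑ x_i²/(a_i²(a_i² − λ)²) = (1/λ) ∑ x_i²/(a_i² − λ)²`.  Consequently the
radius `ρ` of the ellipsoid in the direction of the normal `(x_i/(a_i² − λ))_i`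
of `C(λ)` at `x` satisfies `ρ² = λ`: the squared semi-axes of the central
section parallel to the tangent hyperplane at `x` are the confocal parameters
of the confocals through `x`. -/
theorem central_section_semiaxes
    (n : ℕ) (a : Fin n → ℝ) (ha : ∀ i, 0 < a i)
    (lam : ℝ) (hlam0 : lam ≠ 0) (hlam : ∀ i, (a i) ^ 2 ≠ lam)
    (x : Fin n → ℝ)
    (h0 : ∑ i, (x i) ^ 2 / (a i) ^ 2 = 1)
    (h1 : ∑ i, (x i) ^ 2 / ((a i) ^ 2 - lam) = 1) :
    (∑ i, (x i) ^ 2 / ((a i) ^ 2 * ((a i) ^ 2 - lam) ^ 2)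
        = (1 / lam) * ∑ i, (x i) ^ 2 / ((a i) ^ 2 - lam) ^ 2) ∧
    (∀ ρ : ℝ, 0 < ρ →
      (∑ i, (ρ * (x i / ((a i) ^ 2 - lam)) /
          Real.sqrt (∑ j, (x j / ((a j) ^ 2 - lam)) ^ 2)) ^ 2 / (a i) ^ 2 = 1) →
      ρ ^ 2 = lam) := by
  have hsection : ∑ i, x i ^ 2 / (a i ^ 2 * (a i ^ 2 - lam) ^ 2)
      = 1 / lam * ∑ i, x i ^ 2 / (a i ^ 2 - lam) ^ 2 :=
    sum_div_mul_sub_sq_eq univ (c := fun i => x i ^ 2) (t := fun i => a i ^ 2)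
      (fun i _ => pow_ne_zero 2 (ha i).ne') hlam0 (fun i _ => hlam i) (h0.trans h1.symm)
  refine ⟨hsection, fun ρ _ hρ => ?_⟩
  have hN := sum_sq_confocalNormal_ne_zero h1
  change ∑ i, (ρ * confocalNormal a lam x i / √(∑ j, confocalNormal a lam x j ^ 2)) ^ 2
    / a i ^ 2 = 1 at hρ
  rw [sum_sq_mul_div_sqrt_sum_sq_div, sum_congr rfl fun i _ => sq_confocalNormal_div_sq a lam x i,
    hsection, ← sum_sq_confocalNormal] at hρ
  field_simp at hρ
  exact hρ
end

section
/- Let 0 < a_n < ⋯ < a_1, let λ_1, …, λ_n be distinct real numbers with a_i² ≠ λ_j for all i, j, and let x ∈ ℝⁿ satisfy Σ_{i=1}^n x_i²/(a_i² − λ_j) = 1 for every j. Then for every j ∈ {1, …, n}: Σ_{i=1}^n x_i²/(a_i² − λ_j)² = Π_{k ≠ j} (λ_k − λ_j) / Π_{i=1}^n (a_i² − λ_j). Equivalently, the squared distance (p_j)² = 1/‖n_{λ_j}(x)‖² from the origin to the tangent hyperplane of C(λ_j) at x equals Π_{i=1}^n (a_i² − λ_j) / Π_{k ≠ j} (λ_k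 − λ_j), a formula dual to the one expressing the squared coordinates x_i² through the confocal parameters. -/
/-!
Fix `j` and put `b i = w i / (α i - λ j)`. Subtracting the equations for `λ j` and `λ l`
shows `∑ b i / (α i - λ l) = 0` for `l ≠ j`, so the polynomial `∑ b i ∏_{m ≠ i} (α m - X)`
vanishes at the `n - 1` points `λ l`, `l ≠ j`. Its leading coefficient is `± ∑ b i = ± 1`, the
same as that of `∏_{k ≠ j} (λ k - X)`, so the two polynomials coincide; evaluating both at
`X = λ j` gives `(∑ w i / (α i - λ j) ^ 2) * ∏ (α i - λ j) = ∏_{k ≠ j} (λ k - λ j)`.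
-/

open Polynomial Finset

theorem degree_prod_C_sub_X_sub_prod_C_sub_X_lt {R ι κ : Type*} [CommRing R] [Nontrivial R]
    {A : Finset ι} {B : Finset κ} (hAB : #A = #B) (α : ι → R) (μ : κ → R) :
    (∏ i ∈ A, (C (α i) - X) - ∏ k ∈ B, (C (μ k) - X)).degree < (#A : WithBot ℕ) := by
  have hA : (∏ i ∈ A, (X - C (α i))).Monic := monic_prod_of_monic A _ fun i _ => monic_X_sub_C _
  have hB : (∏ k ∈ B, (X - C (μ k))).Monic := monic_prod_of_monic B _ fun k _ => monic_X_sub_C _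
  have hdeg : (∏ i ∈ A, (X - C (α i))).degree = (#A : WithBot ℕ) := by
    rw [degree_eq_natDegree hA.ne_zero, natDegree_finsetProd_X_sub_C_eq_card]
  have hlt : (∏ i ∈ A, (X - C (α i)) - ∏ k ∈ B, (X - C (μ k))).degree < (#A : WithBot ℕ) := by
    refine hdeg ▸ degree_sub_lt_left ?_ hA.ne_zero (hA.leadingCoeff.trans hB.leadingCoeff.symm)
    rw [hdeg, degree_eq_natDegree hB.ne_zero, natDegree_finsetProd_X_sub_C_eq_card, hAB]
  simp_rw [← neg_sub X, prod_neg]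
  rw [← hAB, ← mul_sub]
  rcases neg_one_pow_eq_or R[X] #A with h | h <;>
    simpa only [h, one_mul, neg_one_mul, degree_neg] using hlt

theorem sum_C_mul_prod_erase_C_sub_X_eq_prod {F ι κ : Type*} [Field F] [DecidableEq ι]
    {s : Finset ι} {t : Finset κ} (hcard : #t + 1 = #s) {b α : ι → F} {μ : κ → F}
    (hμ : Set.InjOn μ t) (hb : ∑ i ∈ s, b i = 1)
    (hroot : ∀ l ∈ t, ∑ i ∈ s, b i * ∏ m ∈ s.erase i, (α m - μ l) = 0) :
    ∑ i ∈ s, C (b i) * ∏ m ∈ s.erase i, (C (α m) - X) = ∏ l ∈ t, (C (μ l) - X) := by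
  refine eq_of_degree_sub_lt_of_eval_index_eq t hμ ?_ fun l hl => ?_
  · have hsmul : ∑ i ∈ s, C (b i) * ∏ m ∈ s.erase i, (C (α m) - X) - ∏ l ∈ t, (C (μ l) - X)
        = ∑ i ∈ s, b i • (∏ m ∈ s.erase i, (C (α m) - X) - ∏ l ∈ t, (C (μ l) - X)) := by
      simp only [smul_sub, sum_sub_distrib, smul_eq_C_mul]
      rw [← sum_mul, ← map_sum, hb, map_one, one_mul]
    rw [hsmul, ← mem_degreeLT]
    refine Submodule.sum_mem _ fun i hi => Submodule.smul_mem _ _ (mem_degreeLT.2 ?_)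
    have hi' : #(s.erase i) = #t := by rw [card_erase_of_mem hi]; omega
    exact hi' ▸ degree_prod_C_sub_X_sub_prod_C_sub_X_lt hi' α μ
  · simp only [eval_finsetSum, eval_mul, eval_C, eval_prod, eval_sub, eval_X, hroot l hl]
    exact (prod_eq_zero hl (sub_self _)).symm

theorem sum_mul_prod_erase_sub_eq {F ι : Type*} [Field F] [DecidableEq ι] (s : Finset ι)
    (b α : ι → F) {z : F} (hz : ∀ i ∈ s, α i ≠ z) :
    ∑ i ∈ s, b i * ∏ m ∈ s.erase i, (α m - z)
      = (∑ i ∈ s, b i / (α i - z)) * ∏ i ∈ s, (α i - z) := by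
  rw [sum_mul]
  refine sum_congr rfl fun i hi => ?_
  rw [← mul_prod_erase s _ hi]
  field_simp [sub_ne_zero.2 (hz i hi)]

theorem sum_div_sub_sub_sum_div_sub {F ι : Type*} [Field F] (s : Finset ι) (w α : ι → F)
    {μ ν : F} (hμ : ∀ i ∈ s, α i ≠ μ) (hν : ∀ i ∈ s, α i ≠ ν) :
    ∑ i ∈ s, w i / (α i - μ) - ∑ i ∈ s, w i / (α i - ν)
      = (μ - ν) * ∑ i ∈ s, w i / ((α i - μ) * (α i - ν)) := by
  rw [← sum_sub_distrib, mul_sum]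
  refine sum_congr rfl fun i hi => ?_
  field_simp [sub_ne_zero.2 (hμ i hi), sub_ne_zero.2 (hν i hi)]
  ring

theorem sum_div_sub_sq_eq_prod_div_prod {F ι : Type*} [Field F] [Fintype ι] [DecidableEq ι]
    {w α lam : ι → F} (hlam : Function.Injective lam) (hreg : ∀ i k, α i ≠ lam k)
    (hw : ∀ k, ∑ i, w i / (α i - lam k) = 1) (j : ι) :
    ∑ i, w i / (α i - lam j) ^ 2 = (∏ k ∈ univ.erase j, (lam k - lam j)) / ∏ i, (α i - lam j) := by
  set b : ι → F := fun i => w i / (α i - lam j)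
  have hroot : ∀ l ∈ univ.erase j, ∑ i, b i * ∏ m ∈ univ.erase i, (α m - lam l) = 0 := by
    intro l hl
    have hjl : lam j - lam l ≠ 0 := sub_ne_zero.2 (hlam.ne (ne_of_mem_erase hl).symm)
    have horth := sum_div_sub_sub_sum_div_sub univ w α (fun i _ => hreg i j) (fun i _ => hreg i l)
    rw [hw j, hw l, sub_self, eq_comm, mul_eq_zero, or_iff_right hjl] at horth
    rw [sum_mul_prod_erase_sub_eq _ _ _ fun i _ => hreg i l]
    simp only [b, div_div, horth, zero_mul]
  have key := congrArg (eval (lam j)) <| sum_C_mul_prod_erase_C_sub_X_eq_prod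
    (card_erase_add_one (mem_univ j)) hlam.injOn (hw j) hroot
  simp only [eval_finsetSum, eval_mul, eval_C, eval_prod, eval_sub, eval_X] at key
  rw [sum_mul_prod_erase_sub_eq _ _ _ fun i _ => hreg i j] at key
  rw [eq_div_iff (prod_ne_zero_iff.2 fun i _ => sub_ne_zero.2 (hreg i j)), ← key]
  simp only [div_div, sq]

theorem tangent_hyperplane_distance_duality_general
    (n : ℕ) (a : Fin n → ℝ)
    (lam : Fin n → ℝ) (hinj : Function.Injective lam)
    (hreg : ∀ i j, (a i) ^ 2 ≠ lam j)
    (x : Fin n → ℝ)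
    (hx : ∀ j, ∑ i, (x i) ^ 2 / ((a i) ^ 2 - lam j) = 1) :
    ∀ j : Fin n,
      (∑ i, (x i) ^ 2 / ((a i) ^ 2 - lam j) ^ 2
        = (∏ k ∈ Finset.univ.erase j, (lam k - lam j))
            / ∏ i, ((a i) ^ 2 - lam j)) ∧
      (1 / ∑ i, (x i / ((a i) ^ 2 - lam j)) ^ 2
        = (∏ i, ((a i) ^ 2 - lam j))
            / ∏ k ∈ Finset.univ.erase j, (lam k - lam j)) := by
  intro j
  have hsum := sum_div_sub_sq_eq_prod_div_prod (w := fun i => x i ^ 2) hinj hreg hx j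
  refine ⟨hsum, ?_⟩
  simp_rw [div_pow]
  rw [hsum, one_div_div]

/-- Duality of confocal systems: if `x` lies on all `n` confocal quadrics
`C(λ_j)`, then for every `j`,
`∑ x_i²/(a_i² − λ_j)² = Π_{k ≠ j}(λ_k − λ_j) / Π_i (a_i² − λ_j)`; equivalently
the squared distance `p_j² = 1/‖n_{λ_j}(x)‖²` from the origin to the tangent
hyperplane of `C(λ_j)` at `x` equals
`Π_i (a_i² − λ_j) / Π_{k ≠ j}(λ_k − λ_j)`. -/
theorem tangent_hyperplane_distance_duality
    (n : ℕ) (a : Fin n → ℝ) (ha : ∀ i, 0 < a i)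
    (hmono : ∀ i j : Fin n, i < j → a j < a i)
    (lam : Fin n → ℝ) (hinj : Function.Injective lam)
    (hreg : ∀ i j, (a i) ^ 2 ≠ lam j)
    (x : Fin n → ℝ)
    (hx : ∀ j, ∑ i, (x i) ^ 2 / ((a i) ^ 2 - lam j) = 1) :
    ∀ j : Fin n,
      (∑ i, (x i) ^ 2 / ((a i) ^ 2 - lam j) ^ 2
        = (∏ k ∈ Finset.univ.erase j, (lam k - lam j))
            / ∏ i, ((a i) ^ 2 - lam j)) ∧
      (1 / ∑ i, (x i / ((a i) ^ 2 - lam j)) ^ 2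
        = (∏ i, ((a i) ^ 2 - lam j))
            / ∏ k ∈ Finset.univ.erase j, (lam k - lam j)) :=
  tangent_hyperplane_distance_duality_general n a lam hinj hreg x hx
end

section
/- Let n ≥ 2, let a_1, …, a_n > 0, let λ > 0, and let u, x ∈ ℝⁿ satisfy Σ_{i=1}^n x_i²/(λ a_i)² = 1. Suppose the normal line of the ellipsoid E(λ) = {y : Σ_i y_i²/(λ a_i)² = 1} at x passes through u; i.e., there is t ∈ ℝ with u_i − x_i = t · x_i/(λ a_i)² for every i. Then for every i ∈ {2, …, n}: (a_1² − a_i²) x_1 x_i + a_i² u_i x_1 − a_1² u_1 x_i = 0. Hence the locus of foot points of u on the homothetic family of ellipsoids E(λ), λ > 0 (the Apollonian curve of the family) satisfies this system of equations, which is independent of λ. -/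
/-! Along the normal line at `x`, `a_i² (u_i − x_i) = (t / λ²) x_i` with a factor `t / λ²` that does
not depend on `i`; eliminating it between the coordinates `1` and `i` gives the equations. -/

section ApollonianCurve

variable {K : Type*} [Field K]

-- For `lam = 0` both sides are `0`, by the convention `y / 0 = 0`.
theorem sq_mul_div_mul_sq {b : K} (hb : b ≠ 0) (lam y : K) :
    b ^ 2 * (y / (lam * b) ^ 2) = y / lam ^ 2 := by
  rw [mul_pow, mul_comm (lam ^ 2), ← mul_div_assoc, mul_div_mul_left y _ (pow_ne_zero 2 hb)]

theorem sq_mul_sub_eq_of_mem_normal_line {ι : Type*} {a u x : ι → K} (ha : ∀ i, a i ≠ 0)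
    {lam t : K} (hnormal : ∀ i, u i - x i = t * (x i / (lam * a i) ^ 2)) (i : ι) :
    a i ^ 2 * (u i - x i) = t / lam ^ 2 * x i := by
  rw [hnormal, mul_left_comm, sq_mul_div_mul_sq (ha i), mul_div_assoc', div_mul_eq_mul_div]

theorem apollonian_eq_of_sq_mul_sub_eq {a₀ a₁ u₀ u₁ x₀ x₁ s : K}
    (h₀ : a₀ ^ 2 * (u₀ - x₀) = s * x₀) (h₁ : a₁ ^ 2 * (u₁ - x₁) = s * x₁) :
    (a₀ ^ 2 - a₁ ^ 2) * x₀ * x₁ + a₁ ^ 2 * u₁ * x₀ - a₀ ^ 2 * u₀ * x₁ = 0 := by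
  linear_combination x₀ * h₁ - x₁ * h₀

end ApollonianCurve

/-- The Apollonian curve of a homothetic family of ellipsoids: if the normal
line of the ellipsoid `E(λ) : ∑ y_i²/(λ a_i)² = 1` at its point `x` passes
through `u`, then for every `i ≥ 2`,
`(a_1² − a_i²) x_1 x_i + a_i² u_i x_1 − a_1² u_1 x_i = 0`, a system of
equations independent of `λ`. -/
theorem apollonian_curve_equations
    (n : ℕ) (hn : 2 ≤ n)
    (a : Fin n → ℝ) (ha : ∀ i, 0 < a i)
    (lam : ℝ)
    (u x : Fin n → ℝ)
    (t : ℝ) (hnormal : ∀ i, u i - x i = t * (x i / (lam * a i) ^ 2))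
    (i : Fin n) :
    ((a ⟨0, by omega⟩) ^ 2 - (a i) ^ 2) * x ⟨0, by omega⟩ * x i
        + (a i) ^ 2 * u i * x ⟨0, by omega⟩
        - (a ⟨0, by omega⟩) ^ 2 * u ⟨0, by omega⟩ * x i = 0 := by
  have h := sq_mul_sub_eq_of_mem_normal_line (fun j => (ha j).ne') hnormal
  exact apollonian_eq_of_sq_mul_sub_eq (h _) (h i)
end

section
/- Let m, n ≥ 1, let r : ℝᵐ → ℝⁿ be differentiable at u₀ ∈ ℝᵐ, let F, P ∈ ℝⁿ, and set Q = r(u₀); assume Q ≠ F and Q ≠ P. If u₀ is a local minimum point of the function u ↦ ‖F − r(u)‖ + ‖r(u) − P‖ (Euclidean norms), then the vector (Q − F)/‖Q − F‖ + (Q − P)/‖Q − P‖ is orthogonal to the range of the derivative of r at u₀; i.e., ⟨(Q − F)/‖Q − F‖ + (Q − P)/‖Q − P‖, Dr(u₀)v⟩ = 0 for every v ∈ ℝᵐ. Consequently, for a parametrized hypersurface this vector is normal to the surface at Q, and the angles between a normal vector of the surface at Q and the segments QF and QP are equal (the fastened-string reflection property). -/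
/-! At a local minimum the derivative of `u ↦ ‖r u - F‖ + ‖r u - P‖` vanishes. Since the
derivative of `x ↦ ‖x - c‖` at `x ≠ c` is the inner product with the unit vector
`(x - c)/‖x - c‖`, the chain rule turns this into the orthogonality of the sum of the two unit
vectors to every `Dr(u₀) v`. -/

section

variable {E F : Type*} [NormedAddCommGroup E] [NormedSpace ℝ E]
  [NormedAddCommGroup F] [InnerProductSpace ℝ F]

theorem HasFDerivAt.norm {f : E → F} {f' : E →L[ℝ] F} {x : E} (hf : HasFDerivAt f f' x)
    (h0 : f x ≠ 0) :
    HasFDerivAt (fun y => ‖f y‖) ((innerSL ℝ (‖f x‖⁻¹ • f x)).comp f') x := by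
  have hsq : ‖f x‖ ^ 2 ≠ 0 := by positivity
  have hsqrt := hf.norm_sq.sqrt hsq
  simp only [Real.sqrt_sq (norm_nonneg _)] at hsqrt
  convert hsqrt using 1
  ext v
  simp only [map_smul, ContinuousLinearMap.smul_comp, smul_apply, ContinuousLinearMap.comp_apply,
    coe_innerSL_apply, smul_eq_mul, one_div, mul_inv_rev, nsmul_eq_mul, Nat.cast_ofNat]
  field_simp

theorem IsLocalMin.inner_unit_add_unit_fderiv_eq_zero {r : E → F} {u₀ : E} {A B : F}
    (hr : DifferentiableAt ℝ r u₀) (hA : r u₀ ≠ A) (hB : r u₀ ≠ B)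
    (hmin : IsLocalMin (fun u => ‖r u - A‖ + ‖r u - B‖) u₀) (v : E) :
    inner ℝ (‖r u₀ - A‖⁻¹ • (r u₀ - A) + ‖r u₀ - B‖⁻¹ • (r u₀ - B)) (fderiv ℝ r u₀ v) = 0 := by
  have hdist (c : F) (hc : r u₀ ≠ c) :=
    (hr.hasFDerivAt.sub_const c).norm (sub_ne_zero.2 hc)
  have hsum := (hdist A hA).add (hdist B hB)
  simpa only [inner_add_left, add_apply, ContinuousLinearMap.comp_apply,
    innerSL_apply_apply, zero_apply]
    using DFunLike.congr_fun (hmin.hasFDerivAt_eq_zero hsum) v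

end

theorem fastened_string_reflection_general
    (m n : ℕ)
    (r : EuclideanSpace ℝ (Fin m) → EuclideanSpace ℝ (Fin n))
    (u₀ : EuclideanSpace ℝ (Fin m))
    (hr : DifferentiableAt ℝ r u₀)
    (F P Q : EuclideanSpace ℝ (Fin n)) (hQ : Q = r u₀)
    (hQF : Q ≠ F) (hQP : Q ≠ P)
    (hmin : IsLocalMin (fun u => ‖F - r u‖ + ‖r u - P‖) u₀) :
    ∀ v : EuclideanSpace ℝ (Fin m),
      (inner ℝ (‖Q - F‖⁻¹ • (Q - F) + ‖Q - P‖⁻¹ • (Q - P))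
        (fderiv ℝ r u₀ v) : ℝ) = 0 := by
  subst hQ
  simp only [norm_sub_rev F] at hmin
  exact hmin.inner_unit_add_unit_fderiv_eq_zero hr hQF hQP

/-- The fastened-string reflection property: if `Q = r(u₀)` minimizes (locally)
the length of the broken line `F Q P` over a differentiably parametrized
surface `r`, then `(Q − F)/‖Q − F‖ + (Q − P)/‖Q − P‖` is orthogonal to the
range of the derivative of `r` at `u₀`, hence normal to the surface at `Q`;
so the angles between the normal and the segments `QF`, `QP` are equal. -/
theorem fastened_string_reflection
    (m n : ℕ) (hm : 1 ≤ m) (hn : 1 ≤ n)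
    (r : EuclideanSpace ℝ (Fin m) → EuclideanSpace ℝ (Fin n))
    (u₀ : EuclideanSpace ℝ (Fin m))
    (hr : DifferentiableAt ℝ r u₀)
    (F P Q : EuclideanSpace ℝ (Fin n)) (hQ : Q = r u₀)
    (hQF : Q ≠ F) (hQP : Q ≠ P)
    (hmin : IsLocalMin (fun u => ‖F - r u‖ + ‖r u - P‖) u₀) :
    ∀ v : EuclideanSpace ℝ (Fin m),
      (inner ℝ (‖Q - F‖⁻¹ • (Q - F) + ‖Q - P‖⁻¹ • (Q - P))
        (fderiv ℝ r u₀ v) : ℝ) = 0 :=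
  fastened_string_reflection_general m n r u₀ hr F P Q hQ hQF hQP hmin
end

section
/- Let 0 < c < b < a, and use the parametrizations E(u) of the focal ellipse and H_ε(v) of the branches of the focal hyperbola. (i) If H₁ = H_ε(v₁) and H₂ = H_ε(v₂) lie on the same branch of the focal hyperbola, then for every point E = E(u) of the focal ellipse the difference ‖H₁ − E‖ − ‖E − H₂‖ equals √(a²−c²)(cosh v₁ − cosh v₂), independently of u. (ii) If H₁ = H_{+1}(v₁) and H₂ = H_{−1}(v₂) lie on different branches, then the sum ‖H₁ − E‖ + ‖E − H₂‖ equals √(a²−c²)(cosh v₁ + cosh v₂), independently of u. (iii) If E₁ = E(u₁), E₂ = E(u₂) lie on the focal ellipse and H = H_ε(v) on the focal hyperbola, then ‖E₁ − H‖ − ‖H − E₂‖ = ε√(a²−b²)(cos u₂ − cos u₁), independently of v. -/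
/-!
Everything rests on one closed formula: the distance from the point `H_ε(v)` of the focal
hyperbola to the point `E(u)` of the focal ellipse is
`√(a² - c²) cosh v - ε √(a² - b²) cos u`, a sum of a term depending only on `v` and a term
depending only on `u`. Indeed, using `sinh² = cosh² - 1`, `sin² = 1 - cos²` and
`(a² - b²) + (b² - c²) = a² - c²`, the squared distance is the square of that expression, which
is nonnegative because `√(a² - b²) ≤ √(a² - c²) ≤ √(a² - c²) cosh v`. In each of the three
string sums and differences, the term in the common point cancels.
-/

open Real

lemma EuclideanSpace.norm_sub_eq_of_ofLp_eq {X Y : EuclideanSpace ℝ (Fin 3)} {x y : Fin 3 → ℝ}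
    (hX : WithLp.ofLp X = x) (hY : WithLp.ofLp Y = y) :
    ‖X - Y‖ = √((x 0 - y 0) ^ 2 + (x 1 - y 1) ^ 2 + (x 2 - y 2) ^ 2) := by
  simp only [EuclideanSpace.norm_eq, Fin.sum_univ_three, PiLp.sub_apply, hX, hY,
    Real.norm_eq_abs, sq_abs]

section FocalConics

variable {a b c ε : ℝ}

lemma focal_dist_sq_eq (hcb : c ^ 2 ≤ b ^ 2) (hba : b ^ 2 ≤ a ^ 2) (hε : ε ^ 2 = 1) (u v : ℝ) :
    (ε * √(a ^ 2 - b ^ 2) * cosh v - √(a ^ 2 - c ^ 2) * cos u) ^ 2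
        + (0 - √(b ^ 2 - c ^ 2) * sin u) ^ 2 + (√(b ^ 2 - c ^ 2) * sinh v - 0) ^ 2
      = (√(a ^ 2 - c ^ 2) * cosh v - ε * √(a ^ 2 - b ^ 2) * cos u) ^ 2 := by
  have hab : √(a ^ 2 - b ^ 2) ^ 2 = a ^ 2 - b ^ 2 := sq_sqrt (by linarith)
  have hbc : √(b ^ 2 - c ^ 2) ^ 2 = b ^ 2 - c ^ 2 := sq_sqrt (by linarith)
  have hac : √(a ^ 2 - c ^ 2) ^ 2 = a ^ 2 - c ^ 2 := sq_sqrt (by linarith)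
  linear_combination (√(a ^ 2 - b ^ 2) ^ 2 * (cosh v ^ 2 - cos u ^ 2)) * hε
    + √(b ^ 2 - c ^ 2) ^ 2 * sin_sq_add_cos_sq u - √(b ^ 2 - c ^ 2) ^ 2 * cosh_sq_sub_sinh_sq v
    + (cosh v ^ 2 - cos u ^ 2) * (hab + hbc - hac)

lemma focal_dist_nonneg (hcb : c ^ 2 ≤ b ^ 2) (hε : ε ^ 2 = 1) (u v : ℝ) :
    0 ≤ √(a ^ 2 - c ^ 2) * cosh v - ε * √(a ^ 2 - b ^ 2) * cos u := by
  have hεcos : ε * cos u ≤ 1 := by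
    have hsq : (ε * cos u) ^ 2 ≤ 1 := by rw [mul_pow, hε, one_mul]; exact cos_sq_le_one u
    exact (abs_le.mp ((sq_le_one_iff_abs_le_one _).mp hsq)).2
  rw [sub_nonneg]
  calc ε * √(a ^ 2 - b ^ 2) * cos u = (ε * cos u) * √(a ^ 2 - b ^ 2) := by ring
    _ ≤ √(a ^ 2 - b ^ 2) := mul_le_of_le_one_left (sqrt_nonneg _) hεcos
    _ ≤ √(a ^ 2 - c ^ 2) := sqrt_le_sqrt (by linarith)
    _ ≤ √(a ^ 2 - c ^ 2) * cosh v := le_mul_of_one_le_right (sqrt_nonneg _) (one_le_cosh v)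

lemma norm_focalHyperbola_sub_focalEllipse (hcb : c ^ 2 ≤ b ^ 2) (hba : b ^ 2 ≤ a ^ 2)
    (hε : ε ^ 2 = 1) {u v : ℝ} {X Y : EuclideanSpace ℝ (Fin 3)}
    (hX : WithLp.ofLp X = ![ε * √(a ^ 2 - b ^ 2) * cosh v, 0, √(b ^ 2 - c ^ 2) * sinh v])
    (hY : WithLp.ofLp Y = ![√(a ^ 2 - c ^ 2) * cos u, √(b ^ 2 - c ^ 2) * sin u, 0]) :
    ‖X - Y‖ = √(a ^ 2 - c ^ 2) * cosh v - ε * √(a ^ 2 - b ^ 2) * cos u := by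
  rw [EuclideanSpace.norm_sub_eq_of_ofLp_eq hX hY]
  simp only [Matrix.cons_val_zero, Matrix.cons_val_one, Matrix.cons_val_two,
    Matrix.head_cons, Matrix.tail_cons]
  rw [focal_dist_sq_eq hcb hba hε, sqrt_sq (focal_dist_nonneg hcb hε u v)]

end FocalConics

/-- For the focal conics of a confocal system with `0 < c < b < a`, with
`E(u)` on the focal ellipse and `H_ε(v)` on the branch `ε` of the focal
hyperbola:
(i) for two points on the same branch of the hyperbola, the difference
`‖H₁ − E‖ − ‖E − H₂‖` is independent of the point `E` of the ellipse;
(ii) for two points on different branches, the sum `‖H₁ − E‖ + ‖E − H₂‖` is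
independent of `E`;
(iii) for two points on the ellipse, the difference `‖E₁ − H‖ − ‖H − E₂‖` is
independent of the point `H` of the hyperbola. -/
theorem staude_string_differences
    (a b c : ℝ) (hc : 0 < c) (hcb : c < b) (hba : b < a)
    (E : ℝ → EuclideanSpace ℝ (Fin 3))
    (hE : ∀ u, E u = ![Real.sqrt (a ^ 2 - c ^ 2) * Real.cos u,
      Real.sqrt (b ^ 2 - c ^ 2) * Real.sin u, 0])
    (H : ℝ → ℝ → EuclideanSpace ℝ (Fin 3))
    (hH : ∀ ε v, H ε v = ![ε * Real.sqrt (a ^ 2 - b ^ 2) * Real.cosh v, 0,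
      Real.sqrt (b ^ 2 - c ^ 2) * Real.sinh v]) :
    (∀ ε : ℝ, (ε = 1 ∨ ε = -1) → ∀ v₁ v₂ u : ℝ,
        ‖H ε v₁ - E u‖ - ‖E u - H ε v₂‖
          = Real.sqrt (a ^ 2 - c ^ 2) * (Real.cosh v₁ - Real.cosh v₂)) ∧
    (∀ v₁ v₂ u : ℝ,
        ‖H 1 v₁ - E u‖ + ‖E u - H (-1) v₂‖
          = Real.sqrt (a ^ 2 - c ^ 2) * (Real.cosh v₁ + Real.cosh v₂)) ∧
    (∀ ε : ℝ, (ε = 1 ∨ ε = -1) → ∀ u₁ u₂ v : ℝ,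
        ‖E u₁ - H ε v‖ - ‖H ε v - E u₂‖
          = ε * Real.sqrt (a ^ 2 - b ^ 2) * (Real.cos u₂ - Real.cos u₁)) := by
  have hcb' : c ^ 2 ≤ b ^ 2 := pow_le_pow_left₀ hc.le hcb.le 2
  have hba' : b ^ 2 ≤ a ^ 2 := pow_le_pow_left₀ (hc.trans hcb).le hba.le 2
  have dist_HE : ∀ ε, (ε = 1 ∨ ε = -1) → ∀ u v, ‖H ε v - E u‖
      = √(a ^ 2 - c ^ 2) * cosh v - ε * √(a ^ 2 - b ^ 2) * cos u := by
    rintro ε hε u v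
    have hε2 : ε ^ 2 = 1 := by rcases hε with rfl | rfl <;> norm_num
    exact norm_focalHyperbola_sub_focalEllipse hcb' hba' hε2 (hH ε v) (hE u)
  have dist_EH : ∀ ε, (ε = 1 ∨ ε = -1) → ∀ u v, ‖E u - H ε v‖
      = √(a ^ 2 - c ^ 2) * cosh v - ε * √(a ^ 2 - b ^ 2) * cos u := fun ε hε u v => by
    rw [norm_sub_rev, dist_HE ε hε u v]
  refine ⟨fun ε hε v₁ v₂ u => ?_, fun v₁ v₂ u => ?_, fun ε hε u₁ u₂ v => ?_⟩
  · rw [dist_HE ε hε u v₁, dist_EH ε hε u v₂]; ring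
  · rw [dist_HE 1 (Or.inl rfl) u v₁, dist_EH (-1) (Or.inr rfl) u v₂]; ring
  · rw [dist_EH ε hε u₁ v, dist_HE ε hε u₂ v]; ring
end

section
/- Let 0 < c < b < a. Let C₃ = {(x,y,0) ∈ ℝ³ : x²/(a²−c²) + y²/(b²−c²) = 1} be the focal ellipse and C₂ = {(x,0,z) ∈ ℝ³ : x²/(a²−b²) − z²/(b²−c²) = 1} the focal hyperbola of the confocal system of the ellipsoid x²/a² + y²/b² + z²/c² = 1. Let v ∈ ℝ³ be a point with v₃ ≠ 0 (v not in the plane of the focal ellipse). Then the cone of lines joining v to the points of C₃ is a right circular cone — i.e., there exist a unit vector d ∈ ℝ³ and a constant γ ∈ ℝ such that ⟨e − v, d⟩² = γ ‖e − v‖² for every e ∈ C₃ — if and only if v ∈ C₂. Thus the locus of apices of right cones through the focal ellipse is the focal hyperbola. -/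
/-!
A quadratic polynomial vanishing on the ellipse `x²/α + y²/β = 1` is a multiple of
`x²/α + y²/β - 1`, as its values at six points of the ellipse show. Applied to
`⟨e - v, d⟩² - γ‖e - v‖²` on the plane `z = 0`, this forces the axis `d` to be orthogonal to
the `y`-axis and `v` to lie in the plane `y = 0`; eliminating `d` and `γ` (where `γ > 0` because
`v` is off the plane) leaves the equation of the focal hyperbola. Conversely, for `v` on the
focal hyperbola the tangent to it at `v` is the axis of a right circular cone through the focal
ellipse.
-/

section Cone

variable {E : Type*} [NormedAddCommGroup E] [InnerProductSpace ℝ E]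

def IsRightCircularCone (v : E) (S : Set E) : Prop :=
  ∃ d : E, ‖d‖ = 1 ∧ ∃ γ : ℝ, ∀ e ∈ S, inner ℝ (e - v) d ^ 2 = γ * ‖e - v‖ ^ 2

theorem isRightCircularCone_of_ne_zero {v u : E} {S : Set E} {γ : ℝ} (hu : u ≠ 0)
    (h : ∀ e ∈ S, inner ℝ (e - v) u ^ 2 = γ * ‖e - v‖ ^ 2) : IsRightCircularCone v S := by
  refine ⟨‖u‖⁻¹ • u, norm_smul_inv_norm hu, γ / ‖u‖ ^ 2, fun e he => ?_⟩
  have : ‖u‖ ≠ 0 := norm_ne_zero_iff.mpr hu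
  rw [real_inner_smul_right, mul_pow, h e he]
  field_simp

end Cone

theorem inner_eq_fin_three (x y : EuclideanSpace ℝ (Fin 3)) :
    inner ℝ x y = x 0 * y 0 + x 1 * y 1 + x 2 * y 2 := by
  simp [PiLp.inner_apply, Fin.sum_univ_three, mul_comm]

theorem norm_sq_eq_fin_three (x : EuclideanSpace ℝ (Fin 3)) :
    ‖x‖ ^ 2 = x 0 ^ 2 + x 1 ^ 2 + x 2 ^ 2 := by
  rw [← real_inner_self_eq_norm_sq, inner_eq_fin_three]
  ring

theorem quadratic_coeffs_of_vanishes_on_ellipse {α β kxx kxy kyy kx ky k : ℝ}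
    (hα : 0 < α) (hβ : 0 < β)
    (h : ∀ x y : ℝ, x ^ 2 / α + y ^ 2 / β = 1 →
      kxx * x ^ 2 + kxy * (x * y) + kyy * y ^ 2 + kx * x + ky * y + k = 0) :
    kx = 0 ∧ ky = 0 ∧ kxy = 0 ∧ kxx * α + k = 0 ∧ kyy * β + k = 0 := by
  obtain ⟨A, hA, rfl⟩ : ∃ A, 0 < A ∧ A ^ 2 = α := ⟨√α, by positivity, Real.sq_sqrt hα.le⟩
  obtain ⟨B, hB, rfl⟩ : ∃ B, 0 < B ∧ B ^ 2 = β := ⟨√β, by positivity, Real.sq_sqrt hβ.le⟩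
  have east := h A 0 (by field_simp; ring)
  have west := h (-A) 0 (by field_simp; ring)
  have north := h 0 B (by field_simp; ring)
  have south := h 0 (-B) (by field_simp; ring)
  have northeast := h (3 / 5 * A) (4 / 5 * B) (by field_simp; ring)
  have southeast := h (3 / 5 * A) (-(4 / 5 * B)) (by field_simp; ring)
  have hkx : kx = 0 := by
    have : A * kx = 0 := by linear_combination (east - west) / 2
    simpa [hA.ne'] using this
  have hky : ky = 0 := by
    have : B * ky = 0 := by linear_combination (north - south) / 2
    simpa [hB.ne'] using this
  refine ⟨hkx, hky, ?_, by linear_combination (east + west) / 2,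
    by linear_combination (north + south) / 2⟩
  have : A * B * kxy = 0 := by
    linear_combination (northeast - southeast) * 25 / 24 - 5 / 3 * B * hky
  simpa [hA.ne', hB.ne'] using this

theorem focalHyperbola_equation_of_cone_coefficients {α β p q r d₀ d₁ d₂ γ s : ℝ}
    (hβ : 0 < β) (hβα : β < α) (hr : r ≠ 0) (hd : d₀ ^ 2 + d₁ ^ 2 + d₂ ^ 2 = 1) (hγ : 0 ≤ γ)
    (hs : s = p * d₀ + q * d₁ + r * d₂) (h₀ : d₀ * s = γ * p) (h₁ : d₁ * s = γ * q)
    (h₀₁ : d₀ * d₁ = 0) (h₀₀ : (d₀ ^ 2 - γ) * α = γ * (p ^ 2 + q ^ 2 + r ^ 2) - s ^ 2)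
    (h₁₁ : (d₁ ^ 2 - γ) * β = γ * (p ^ 2 + q ^ 2 + r ^ 2) - s ^ 2) :
    q = 0 ∧ (α - β) * (β + p ^ 2 + r ^ 2) = α * p ^ 2 := by
  have hd₁ : d₁ = 0 := by
    rcases mul_eq_zero.mp h₀₁ with hd₀ | hd₁
    · have : β * d₁ ^ 2 = -(γ * (α - β)) := by
        linear_combination h₁₁ - h₀₀ + α * d₀ * hd₀
      have : β * d₁ ^ 2 ≤ 0 := this ▸ neg_nonpos.mpr (mul_nonneg hγ (by linarith))
      exact pow_eq_zero_iff two_ne_zero |>.mp (by nlinarith [sq_nonneg d₁])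
    · exact hd₁
  have hd₀ : α * d₀ ^ 2 = γ * (α - β) := by linear_combination h₀₀ - h₁₁ + β * d₁ * hd₁
  have hs2 : s ^ 2 = γ * (β + p ^ 2 + q ^ 2 + r ^ 2) := by
    linear_combination h₁₁ - β * d₁ * hd₁
  have hγ : 0 < γ := by
    refine hγ.lt_of_ne fun hγ ↦ hr ?_
    subst hγ
    have hd₀ : d₀ = 0 := by simpa [(hβ.trans hβα).ne'] using hd₀
    have hrd₂ : r * d₂ = 0 := by simpa [hs, hd₀, hd₁] using hs2
    have hd₂ : d₂ ^ 2 = 1 := by simpa [hd₀, hd₁] using hd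
    exact (mul_eq_zero.mp hrd₂).resolve_right fun h ↦ by simp [h] at hd₂
  have hq : q = 0 := by simpa [hd₁, hγ.ne'] using h₁
  subst hq
  refine ⟨rfl, mul_left_cancel₀ (pow_ne_zero 2 hγ.ne') ?_⟩
  linear_combination (α * (d₀ * s + γ * p)) * h₀ - γ * (α - β) * hs2 - s ^ 2 * hd₀

def focalEllipse (a b c : ℝ) : Set (EuclideanSpace ℝ (Fin 3)) :=
  {e | e 0 ^ 2 / (a ^ 2 - c ^ 2) + e 1 ^ 2 / (b ^ 2 - c ^ 2) = 1 ∧ e 2 = 0}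

def focalHyperbola (a b c : ℝ) : Set (EuclideanSpace ℝ (Fin 3)) :=
  {v | v 0 ^ 2 / (a ^ 2 - b ^ 2) - v 2 ^ 2 / (b ^ 2 - c ^ 2) = 1 ∧ v 1 = 0}

section FocalConics

variable {a b c : ℝ} (hcb : c ^ 2 < b ^ 2) (hba : b ^ 2 < a ^ 2) {v : EuclideanSpace ℝ (Fin 3)}
include hcb hba

theorem mem_focalHyperbola_of_isRightCircularCone (hv : v 2 ≠ 0)
    (h : IsRightCircularCone v (focalEllipse a b c)) : v ∈ focalHyperbola a b c := by
  obtain ⟨d, hd, γ, hcone⟩ := h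
  have hα : 0 < a ^ 2 - c ^ 2 := by linarith
  have hβ : 0 < b ^ 2 - c ^ 2 := by linarith
  have hφ : 0 < a ^ 2 - b ^ 2 := by linarith
  have hγ : 0 ≤ γ := by
    have hvert : !₂[√(a ^ 2 - c ^ 2), 0, 0] ∈ focalEllipse a b c := by
      simp [focalEllipse, Real.sq_sqrt hα.le, hα.ne']
    have hne : !₂[√(a ^ 2 - c ^ 2), 0, 0] - v ≠ 0 := sub_ne_zero.mpr fun h ↦ hv (by simp [← h])
    exact nonneg_of_mul_nonneg_left (hcone _ hvert ▸ sq_nonneg _) (by positivity)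
  set s := v 0 * d 0 + v 1 * d 1 + v 2 * d 2 with hs
  have hplane : ∀ x y : ℝ, x ^ 2 / (a ^ 2 - c ^ 2) + y ^ 2 / (b ^ 2 - c ^ 2) = 1 →
      (d 0 ^ 2 - γ) * x ^ 2 + 2 * d 0 * d 1 * (x * y) + (d 1 ^ 2 - γ) * y ^ 2
        + 2 * (γ * v 0 - d 0 * s) * x + 2 * (γ * v 1 - d 1 * s) * y
        + (s ^ 2 - γ * (v 0 ^ 2 + v 1 ^ 2 + v 2 ^ 2)) = 0 := by
    intro x y hxy
    have := hcone !₂[x, y, 0] ⟨by simpa using hxy, by simp⟩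
    rw [inner_eq_fin_three, norm_sq_eq_fin_three] at this
    simp only [PiLp.sub_apply, Matrix.cons_val_zero, Matrix.cons_val_one, Matrix.cons_val] at this
    linear_combination this
  obtain ⟨h₀, h₁, h₀₁, h₀₀, h₁₁⟩ := quadratic_coeffs_of_vanishes_on_ellipse hα hβ hplane
  have hunit : d 0 ^ 2 + d 1 ^ 2 + d 2 ^ 2 = 1 := by rw [← norm_sq_eq_fin_three, hd, one_pow]
  obtain ⟨hq, hp⟩ := focalHyperbola_equation_of_cone_coefficients (α := a ^ 2 - c ^ 2) hβ
    (by linarith) hv hunit hγ hs (by linarith) (by linarith) (by linarith) (by linarith)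
    (by linarith)
  refine ⟨?_, hq⟩
  field_simp
  linear_combination -hp

theorem isRightCircularCone_focalEllipse_of_mem_focalHyperbola (h : v ∈ focalHyperbola a b c) :
    IsRightCircularCone v (focalEllipse a b c) := by
  obtain ⟨hhyp, hv₁⟩ := h
  have hα : 0 < a ^ 2 - c ^ 2 := by linarith
  have hβ : 0 < b ^ 2 - c ^ 2 := by linarith
  have hφ : 0 < a ^ 2 - b ^ 2 := by linarith
  have hv₀ : v 0 ≠ 0 := by
    intro h0
    rw [h0, sq, zero_mul, zero_div, zero_sub] at hhyp
    have : 0 ≤ v 2 ^ 2 / (b ^ 2 - c ^ 2) := by positivity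
    linarith
  -- the axis is the tangent to the focal hyperbola at `v`
  refine isRightCircularCone_of_ne_zero
    (u := !₂[v 2 * (a ^ 2 - b ^ 2), 0, v 0 * (b ^ 2 - c ^ 2)])
    (γ := (a ^ 2 - c ^ 2) * (a ^ 2 - b ^ 2) * v 2 ^ 2) ?_ ?_
  · intro hu
    have := congrArg (· 2) hu
    simp [hv₀, hβ.ne'] at this
  · rintro e ⟨hell, he₂⟩
    rw [inner_eq_fin_three, norm_sq_eq_fin_three]
    simp only [PiLp.sub_apply, he₂, hv₁, Matrix.cons_val_zero, Matrix.cons_val_one, Matrix.cons_val]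
    field_simp at hell hhyp
    linear_combination (-(a ^ 2 - b ^ 2) * v 2 ^ 2) * hell + (a ^ 2 - c ^ 2) * v 2 ^ 2 * hhyp

end FocalConics

/-- The locus of apices of right circular cones through the focal ellipse
`C₃ : x²/(a²−c²) + y²/(b²−c²) = 1, z = 0` is the focal hyperbola
`C₂ : x²/(a²−b²) − z²/(b²−c²) = 1, y = 0`: for a point `v` outside the plane
of the focal ellipse, the cone of lines joining `v` to the points of `C₃` is
right circular (i.e. there are a unit vector `d` and a constant `γ` with
`⟨e − v, d⟩² = γ‖e − v‖²` for all `e ∈ C₃`) if and only if `v ∈ C₂`. -/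
theorem right_circular_cones_through_focal_ellipse
    (a b c : ℝ) (hc : 0 < c) (hcb : c < b) (hba : b < a)
    (v : EuclideanSpace ℝ (Fin 3)) (hv : v 2 ≠ 0) :
    (∃ d : EuclideanSpace ℝ (Fin 3), ‖d‖ = 1 ∧ ∃ γ : ℝ,
        ∀ e : EuclideanSpace ℝ (Fin 3),
          (e 0) ^ 2 / (a ^ 2 - c ^ 2) + (e 1) ^ 2 / (b ^ 2 - c ^ 2) = 1 →
          e 2 = 0 →
          (inner ℝ (e - v) d : ℝ) ^ 2 = γ * ‖e - v‖ ^ 2) ↔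
      ((v 0) ^ 2 / (a ^ 2 - b ^ 2) - (v 2) ^ 2 / (b ^ 2 - c ^ 2) = 1
        ∧ v 1 = 0) := by
  have hcb' : c ^ 2 < b ^ 2 := pow_lt_pow_left₀ hcb hc.le two_ne_zero
  have hba' : b ^ 2 < a ^ 2 := pow_lt_pow_left₀ hba (hc.trans hcb).le two_ne_zero
  have key : IsRightCircularCone v (focalEllipse a b c) ↔ v ∈ focalHyperbola a b c :=
    ⟨mem_focalHyperbola_of_isRightCircularCone hcb' hba' hv,
      isRightCircularCone_focalEllipse_of_mem_focalHyperbola hcb' hba'⟩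
  simpa only [IsRightCircularCone, focalEllipse, focalHyperbola, Set.mem_ofPred_eq, and_imp]
    using key
end
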